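/- arXiv:2501.19119 — 7 statements merged into one kernel-verified Lean document; each statement's English description precedes it below -/
import Mathlib

section
/- Comparison principle: let n ≥ 1 be an integer, m > 1, μ ∈ ℝ, ε ∈ (0,1), 0 ≤ a < b and T > 0. Let u̲, w̄ : [a,b]×[0,T) → ℝ be continuous, continuously differentiable on (a,b)×(0,T), with ∂_s u̲ and ∂_s w̄ locally bounded on [a,b]×[0,T) and satisfying ∂_s u̲ ≥ 0 and ∂_s w̄ ≥ 0 on (a,b)×(0,T); assume moreover that for every t ∈ (0,T) the functions ∂_s u̲(·,t) and ∂_s w̄(·,t) are locally Lipschitz on (a,b), and that for every t ∈ (0,T) and almost every s ∈ (a,b) the second spatial derivatives ∂_{ss}u̲(s,t) and ∂_{ss}w̄(s,t) exist and satisfy (P_ε u̲)(s,t) ≤ 0 and (P_ε w̄)(s,t) ≥ 0. If u̲(s,0) ≤ w̄(s,0) for all s ∈ (a,b) and u̲(s,t) ≤ w̄(s,t) for s ∈ {a,b} and all t ∈ (0,T), then u̲(s,t) ≤ w̄(s,t) for all s ∈ (a,b) and t ∈ (0,T). -/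
open Set MeasureTheory Filter

/-- The parabolic operator `P_ε` acting on a function `w = w(s,t)`:
`(P_ε w)(s,t) = ∂_t w − n² s^{2−2/n} (∂_s w + ε)^{m−1} ∂_{ss} w − w ∂_s w + μ s ∂_s w`. -/
noncomputable def Peps (n : ℕ) (m μ ε : ℝ) (w : ℝ → ℝ → ℝ) (s t : ℝ) : ℝ :=
  deriv (fun τ => w s τ) t
    - (n : ℝ) ^ 2 * s ^ ((2 : ℝ) - 2 / (n : ℝ))
      * (deriv (fun σ => w σ t) s + ε) ^ (m - 1)
      * deriv (deriv (fun σ => w σ t)) s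
    - w s t * deriv (fun σ => w σ t) s
    + μ * s * deriv (fun σ => w σ t) s

/-- The critical constant `C_crit(r₁)` from the paper. -/
noncomputable def Ccrit (n : ℕ) (R m μ r₁ : ℝ) : ℝ :=
  (m - 1) / m * (μ * (R ^ n - r₁ ^ n) * (m - 1) / (r₁ ^ (2 * n - 2) * (n : ℝ) ^ 2)) ^ (1 / (m - 1))

/-- slope eventually bounded for points of a Lipschitz set -/
lemma abs_deriv_le_of_lipschitzOnWith {g : ℝ → ℝ} {L : NNReal} {s : Set ℝ} {x : ℝ}
    (hs : s ∈ nhds x) (hlip : LipschitzOnWith L g s) (hd : DifferentiableAt ℝ g x) :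
    |deriv g x| ≤ L := by
  have hx : x ∈ s := mem_of_mem_nhds hs
  have hslope : Tendsto (slope g x) (nhdsWithin x {x}ᶜ) (nhds (deriv g x)) :=
    (hasDerivAt_iff_tendsto_slope.1 hd.hasDerivAt)
  have habs : Tendsto (fun y => |slope g x y|) (nhdsWithin x {x}ᶜ) (nhds |deriv g x|) :=
    hslope.abs
  refine le_of_tendsto habs ?_
  filter_upwards [self_mem_nhdsWithin, mem_nhdsWithin_of_mem_nhds hs] with y hy hys
  have hxy : y ≠ x := hy
  rw [slope_def_field]
  rw [abs_div]
  rw [div_le_iff₀ (by simp [sub_eq_zero, hxy] : (0:ℝ) < |y - x|)]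
  have := hlip.dist_le_mul y hys x hx
  simpa [Real.dist_eq] using this

/-- Key lemma: a Lipschitz function whose derivative is a.e. (where it exists, and it exists
a.e. as part of the hypothesis) bounded by `c` satisfies `v q - v p ≤ c (q - p)`. -/
lemma lipschitz_sub_le_of_ae_deriv_le {v : ℝ → ℝ} {L : NNReal} {p q c : ℝ} (hpq : p < q)
    (hlip : LipschitzOnWith L v (Icc p q))
    (hae : ∀ᵐ x ∂(volume : Measure ℝ), x ∈ Ioo p q → DifferentiableAt ℝ v x ∧ deriv v x ≤ c) :
    v q - v p ≤ c * (q - p) := by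
  have key : ∀ η : ℝ, 0 < η → η ≤ 1 →
      v q - v p ≤ c * (q - p) + η * ((q - p) + (L + |c| + 1)) := by
    intro η hη hη1
    -- the bad set
    set A : Set ℝ := {x | ¬ (x ∈ Ioo p q → DifferentiableAt ℝ v x ∧ deriv v x ≤ c)} with hA
    have hAnull : volume A = 0 := hae
    have hAnull' : volume (A ∪ {p}) = 0 := by
      refine le_antisymm ?_ (zero_le)
      calc volume (A ∪ {p}) ≤ volume A + volume {p} := measure_union_le _ _
        _ = 0 := by simp [hAnull]
    obtain ⟨U, hUA, hUopen, hUvol⟩ := Set.exists_isOpen_lt_of_lt (A ∪ {p})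
      (ENNReal.ofReal η) (by rw [hAnull']; exact ENNReal.ofReal_pos.2 hη)
    -- the auxiliary monotone function
    set g : ℝ → ℝ := fun t => (volume (U ∩ Ioc p t)).toReal with hg
    have hUfin : ∀ t, volume (U ∩ Ioc p t) < ⊤ :=
      fun t => lt_of_le_of_lt (measure_mono inter_subset_left)
        (hUvol.trans_le le_top)
    have hgmono : ∀ ⦃x y : ℝ⦄, x ≤ y → g x ≤ g y := by
      intro x y hxy
      exact ENNReal.toReal_mono (hUfin y).ne
        (measure_mono (inter_subset_inter_right _ (Ioc_subset_Ioc le_rfl hxy)))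
    have hgadd : ∀ ⦃x y : ℝ⦄, p ≤ x → x ≤ y → g y - g x ≤ y - x := by
      intro x y hpx hxy
      have hsub : U ∩ Ioc p y ⊆ (U ∩ Ioc p x) ∪ Ioc x y := by
        intro z hz
        rcases le_or_gt z x with h | h
        · exact Or.inl ⟨hz.1, hz.2.1, h⟩
        · exact Or.inr ⟨h, hz.2.2⟩
      have h1 : volume (U ∩ Ioc p y) ≤ volume (U ∩ Ioc p x) + volume (Ioc x y) :=
        le_trans (measure_mono hsub) (measure_union_le _ _)
      have h2 : volume (Ioc x y) = ENNReal.ofReal (y - x) := by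
        rw [Real.volume_Ioc]
      have hfin2 : volume (U ∩ Ioc p x) + volume (Ioc x y) ≠ ⊤ := by
        rw [h2]; exact (ENNReal.add_lt_top.2 ⟨hUfin x, ENNReal.ofReal_lt_top⟩).ne
      have h3 := ENNReal.toReal_mono hfin2 h1
      rw [ENNReal.toReal_add (hUfin x).ne (by rw [h2]; exact ENNReal.ofReal_lt_top.ne),
        h2, ENNReal.toReal_ofReal (by linarith)] at h3
      simp only [hg]
      linarith
    have hglip : LipschitzWith 1 g := by
      refine LipschitzWith.of_dist_le_mul fun x y => ?_
      rw [Real.dist_eq, Real.dist_eq, NNReal.coe_one, one_mul]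
      rcases le_total x y with h | h
      · rw [abs_of_nonpos (by linarith [hgmono h]), abs_of_nonpos (by linarith)]
        rcases le_or_gt p x with hp | hp
        · linarith [hgadd hp h]
        · have hx0 : g x = 0 := by
            simp [hg, Ioc_eq_empty_of_le hp.le, measure_empty]
          rcases le_or_gt p y with hp2 | hp2
          · have := hgadd le_rfl hp2
            have hgp : g p = 0 := by simp [hg]
            rw [hgp] at this
            rw [hx0]; linarith
          · have hy0 : g y = 0 := by
              simp [hg, Ioc_eq_empty_of_le hp2.le, measure_empty]
            rw [hx0, hy0]; simp; linarith
      · rw [abs_of_nonneg (by linarith [hgmono h]), abs_of_nonneg (by linarith)]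
        rcases le_or_gt p y with hp | hp
        · linarith [hgadd hp h]
        · have hy0 : g y = 0 := by
            simp [hg, Ioc_eq_empty_of_le hp.le, measure_empty]
          rcases le_or_gt p x with hp2 | hp2
          · have := hgadd le_rfl hp2
            have hgp : g p = 0 := by simp [hg]
            rw [hgp] at this
            rw [hy0]; linarith
          · have hx0 : g x = 0 := by
              simp [hg, Ioc_eq_empty_of_le hp2.le, measure_empty]
            rw [hx0, hy0]; simp; linarith
    -- local increment in U
    have hgU : ∀ x : ℝ, p ≤ x → x ∈ U → ∀ᶠ y in nhdsWithin x (Ioi x), g y - g x = y - x := by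
      intro x hpx hxU
      obtain ⟨δ, hδ, hball⟩ := Metric.isOpen_iff.1 hUopen x hxU
      have hev : Ioo x (x + δ) ∈ nhdsWithin x (Ioi x) :=
        Ioo_mem_nhdsGT_of_mem ⟨le_rfl, by linarith⟩
      filter_upwards [hev] with y hy
      have hIoc : Ioc x y ⊆ U := by
        intro z hz
        apply hball
        rw [Metric.mem_ball, Real.dist_eq, abs_of_pos (by linarith [hz.1])]
        linarith [hz.2, hy.2]
      have hdecomp : U ∩ Ioc p y = (U ∩ Ioc p x) ∪ Ioc x y := by
        apply Subset.antisymm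
        · intro z hz
          rcases le_or_gt z x with h | h
          · exact Or.inl ⟨hz.1, hz.2.1, h⟩
          · exact Or.inr ⟨h, hz.2.2⟩
        · rintro z (⟨hzU, hzI⟩ | hzI)
          · exact ⟨hzU, hzI.1, hzI.2.trans hy.1.le⟩
          · exact ⟨hIoc hzI, lt_of_le_of_lt hpx hzI.1, hzI.2⟩
      have hdisj : Disjoint (U ∩ Ioc p x) (Ioc x y) := by
        refine Set.disjoint_left.2 fun z hz hz2 => ?_
        exact absurd hz.2.2 (not_le.2 hz2.1)
      have : volume (U ∩ Ioc p y) = volume (U ∩ Ioc p x) + volume (Ioc x y) := by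
        rw [hdecomp, measure_union hdisj measurableSet_Ioc]
      simp only [hg]
      rw [this, ENNReal.toReal_add (hUfin x).ne
        (by rw [Real.volume_Ioc]; exact ENNReal.ofReal_lt_top.ne),
        Real.volume_Ioc, ENNReal.toReal_ofReal (by linarith [hy.1.le])]
      ring
    -- the decreasing auxiliary function
    set w : ℝ → ℝ := fun t => v t - (c + η) * t - ((L : ℝ) + |c| + η) * g t with hw
    have hwcont : ContinuousOn w (Icc p q) := by
      apply ContinuousOn.sub
      apply ContinuousOn.sub hlip.continuousOn (by fun_prop)
      exact (continuous_const.mul hglip.continuous).continuousOn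
    -- local decrease
    have hlocal : ∀ x ∈ Ico p q, ∀ᶠ y in nhdsWithin x (Ioi x), w y ≤ w x := by
      intro x hx
      by_cases hxU : x ∈ U
      · -- Lipschitz case
        have hev1 := hgU x hx.1 hxU
        have hev2 : Ioc x q ∈ nhdsWithin x (Ioi x) := Ioc_mem_nhdsGT_of_mem ⟨le_rfl, hx.2⟩
        filter_upwards [hev1, hev2] with y hy1 hy2
        have hvy : v y - v x ≤ (L : ℝ) * (y - x) := by
          have h0 := hlip.dist_le_mul y ⟨(hx.1.trans hy2.1.le), hy2.2⟩ x ⟨hx.1, hx.2.le⟩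
          rw [Real.dist_eq, Real.dist_eq] at h0
          have h2 : |y - x| = y - x := abs_of_pos (by linarith [hy2.1])
          rw [h2] at h0
          exact (le_abs_self _).trans h0
        have hyx : x < y := hy2.1
        simp only [hw]
        have h3 : 0 ≤ (c + |c| + 2*η) * (y - x) :=
          mul_nonneg (by linarith [neg_abs_le c]) (by linarith)
        have h5 : ((L:ℝ) + |c| + η) * (g y - g x) = ((L:ℝ) + |c| + η) * (y - x) := by
          rw [hy1]
        nlinarith [h5]
      · -- differentiable case
        have hxA : x ∉ A ∪ {p} := fun h => hxU (hUA h)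
        have hxp : x ≠ p := fun h => hxA (Or.inr (by simp [h]))
        have hxIoo : x ∈ Ioo p q := ⟨lt_of_le_of_ne hx.1 (Ne.symm hxp), hx.2⟩
        have hgood : DifferentiableAt ℝ v x ∧ deriv v x ≤ c := by
          by_contra h
          refine hxA (Or.inl ?_)
          simp only [hA, mem_setOf_eq]
          intro himp
          exact h (himp hxIoo)
        have hslope : Tendsto (slope v x) (nhdsWithin x {x}ᶜ) (nhds (deriv v x)) :=
          hasDerivAt_iff_tendsto_slope.1 hgood.1.hasDerivAt
        have hslope' : Tendsto (slope v x) (nhdsWithin x (Ioi x)) (nhds (deriv v x)) :=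
          hslope.mono_left (nhdsWithin_mono _ (fun y hy => ne_of_gt hy))
        have hev : ∀ᶠ y in nhdsWithin x (Ioi x), slope v x y < c + η :=
          hslope'.eventually_lt_const (by linarith [hgood.2])
        filter_upwards [hev, self_mem_nhdsWithin] with y hy hyI
        have hyx : x < y := hyI
        have hvy : v y - v x ≤ (c + η) * (y - x) := by
          rw [slope_def_field] at hy
          have := (div_le_iff₀ (by linarith : (0:ℝ) < y - x)).1 hy.le
          linarith
        have hgmono' := hgmono hyx.le
        have hC : 0 ≤ (L:ℝ) + |c| + η := by
          have : (0:ℝ) ≤ L := L.2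
          have := abs_nonneg c
          linarith
        have h4 := mul_nonneg hC (by linarith : (0:ℝ) ≤ g y - g x)
        simp only [hw]
        nlinarith
    -- real induction: w q ≤ w p
    have hwq : w q ≤ w p := by
      set s : Set ℝ := {t | w t ≤ w p} with hs
      have hclosed : IsClosed (s ∩ Icc p q) := by
        rw [inter_comm]
        exact hwcont.preimage_isClosed_of_isClosed isClosed_Icc isClosed_Iic
      have hsub : Icc p q ⊆ s := by
        apply hclosed.Icc_subset_of_forall_exists_gt
        · show w p ≤ w p
          exact le_rfl
        · intro x hx y hy
          have hxs : w x ≤ w p := hx.1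
          have hev := hlocal x hx.2
          have hev2 : Ioc x y ∈ nhdsWithin x (Ioi x) := Ioc_mem_nhdsGT_of_mem ⟨le_rfl, hy⟩
          obtain ⟨z, hz1, hz2⟩ := (hev.and hev2).exists
          exact ⟨z, ⟨show w z ≤ w p from hz1.trans hxs, hz2⟩⟩
      exact hsub ⟨hpq.le, le_rfl⟩
    -- unfold
    have hgp : g p = 0 := by simp [hg]
    have hgq : g q ≤ η := by
      have h1 : volume (U ∩ Ioc p q) ≤ ENNReal.ofReal η :=
        le_trans (measure_mono inter_subset_left) hUvol.le
      calc g q ≤ (ENNReal.ofReal η).toReal := ENNReal.toReal_mono ENNReal.ofReal_lt_top.ne h1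
        _ = η := ENNReal.toReal_ofReal hη.le
    have hL : (0:ℝ) ≤ L := L.2
    have habsc : 0 ≤ |c| := abs_nonneg c
    simp only [hw] at hwq
    rw [hgp] at hwq
    nlinarith [hgmono (le_of_lt hpq), hgq]
  -- take the limit
  by_contra hcon
  push_neg at hcon
  obtain ⟨K0, hK0⟩ : ∃ K0 : ℝ, K0 = (q - p) + ((L : ℝ) + |c| + 1) := ⟨_, rfl⟩
  have hK0pos : 0 < K0 := by
    have h1 : (0:ℝ) ≤ L := L.2
    have h2 := abs_nonneg c
    rw [hK0]; nlinarith
  obtain ⟨ε0, hε0⟩ : ∃ e : ℝ, e = v q - v p - c * (q - p) := ⟨_, rfl⟩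
  have hε0pos : 0 < ε0 := by rw [hε0]; linarith
  obtain ⟨η, hη⟩ : ∃ e : ℝ, e = min 1 (ε0 / (2 * K0)) := ⟨_, rfl⟩
  have hηpos : 0 < η := by rw [hη]; exact lt_min one_pos (by positivity)
  have hη1 : η ≤ 1 := by rw [hη]; exact min_le_left _ _
  have hkey := key η hηpos hη1
  have hηK : η * K0 ≤ ε0 / 2 := by
    have h1 : η ≤ ε0 / (2 * K0) := by rw [hη]; exact min_le_right _ _
    calc η * K0 ≤ (ε0 / (2 * K0)) * K0 := by nlinarith
      _ = ε0 / 2 := by field_simp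
  rw [← hK0] at hkey
  linarith [hε0 ▸ hε0pos]

/-- At a left minimum, the derivative is nonpositive. -/
lemma deriv_nonpos_of_isMinOn_left {f : ℝ → ℝ} {x w c : ℝ} (hw : w < x)
    (hd : HasDerivAt f c x) (hmin : ∀ y ∈ Icc w x, f x ≤ f y) : c ≤ 0 := by
  have hslope : Tendsto (slope f x) (nhdsWithin x {x}ᶜ) (nhds c) :=
    hasDerivAt_iff_tendsto_slope.1 hd
  have hslope' : Tendsto (slope f x) (nhdsWithin x (Iio x)) (nhds c) :=
    hslope.mono_left (nhdsWithin_mono _ (fun y hy => ne_of_lt hy))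
  refine le_of_tendsto hslope' ?_
  have hev : Ioo w x ∈ nhdsWithin x (Iio x) := Ioo_mem_nhdsLT_of_mem ⟨hw, le_rfl⟩
  filter_upwards [hev] with y hy
  rw [slope_def_field]
  apply div_nonpos_of_nonneg_of_nonpos
  · have := hmin y ⟨hy.1.le, hy.2.le⟩; linarith
  · linarith [hy.2]

/-- Nonnegativity extends from the open interval to the closed one. -/
lemma nonneg_on_Icc_of_Ioo {g : ℝ → ℝ} {a b : ℝ} (hab : a < b)
    (hc : ContinuousOn g (Icc a b)) (h : ∀ x ∈ Ioo a b, 0 ≤ g x) :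
    ∀ x ∈ Icc a b, 0 ≤ g x := by
  intro x hx
  have hxcl : x ∈ closure (Ioo a b) := by rw [closure_Ioo hab.ne]; exact hx
  have hne : (nhdsWithin x (Ioo a b)).NeBot := mem_closure_iff_nhdsWithin_neBot.1 hxcl
  have hcw : Tendsto g (nhdsWithin x (Ioo a b)) (nhds (g x)) :=
    (hc x hx).mono_left (nhdsWithin_mono _ Ioo_subset_Icc_self)
  refine ge_of_tendsto hcw ?_
  filter_upwards [self_mem_nhdsWithin] with y hy using h y hy

/-- Lipschitz estimate for `x ↦ (x+ε)^(m-1)` on `[0, M]`. -/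
lemma rpow_shift_lipschitz {m ε M : ℝ} (hm : 1 < m) (hε : 0 < ε) {x y : ℝ}
    (hx : x ∈ Icc (0:ℝ) M) (hy : y ∈ Icc (0:ℝ) M) :
    |(x + ε) ^ (m - 1) - (y + ε) ^ (m - 1)| ≤
      ((m - 1) * max (ε ^ (m - 2)) ((M + ε) ^ (m - 2))) * |x - y| := by
  set C : ℝ := (m - 1) * max (ε ^ (m - 2)) ((M + ε) ^ (m - 2)) with hC
  have key : ∀ z ∈ Icc (0:ℝ) M, HasDerivWithinAt (fun u => (u + ε) ^ (m - 1))
      ((m - 1) * (z + ε) ^ (m - 2)) (Icc 0 M) z := by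
    intro z hz
    have hz0 : z + ε ≠ 0 := by nlinarith [hz.1]
    have h1 : HasDerivAt (fun u : ℝ => (u + ε) ^ (m - 1))
        ((m - 1) * (z + ε) ^ (m - 1 - 1) * 1) z := by
      exact (Real.hasDerivAt_rpow_const (Or.inl hz0)).comp z ((hasDerivAt_id z).add_const ε)
    have h2 : m - 1 - 1 = m - 2 := by ring
    rw [h2, mul_one] at h1
    exact h1.hasDerivWithinAt
  have bound : ∀ z ∈ Icc (0:ℝ) M, ‖(m - 1) * (z + ε) ^ (m - 2)‖ ≤ C := by
    intro z hz
    have hzε : ε ≤ z + ε := by linarith [hz.1]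
    have hzM : z + ε ≤ M + ε := by linarith [hz.2]
    have hpos : (0:ℝ) < (z + ε) ^ (m - 2) := Real.rpow_pos_of_pos (by linarith) _
    rw [Real.norm_eq_abs, abs_mul, abs_of_nonneg (by linarith : (0:ℝ) ≤ m - 1),
      abs_of_pos hpos]
    rw [hC]
    apply mul_le_mul_of_nonneg_left _ (by linarith : (0:ℝ) ≤ m - 1)
    rcases le_or_gt (m - 2) 0 with hm2 | hm2
    · exact le_max_of_le_left (Real.rpow_le_rpow_of_nonpos hε hzε hm2)
    · exact le_max_of_le_right (Real.rpow_le_rpow (by linarith) hzM hm2.le)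
  have := Convex.norm_image_sub_le_of_norm_hasDerivWithin_le key bound (convex_Icc 0 M) hy hx
  simpa [Real.norm_eq_abs] using this

lemma lipschitzOnWith_sub {f g : ℝ → ℝ} {Lf Lg : NNReal} {s : Set ℝ}
    (hf : LipschitzOnWith Lf f s) (hg : LipschitzOnWith Lg g s) :
    LipschitzOnWith (Lf + Lg) (fun x => f x - g x) s := by
  rw [lipschitzOnWith_iff_dist_le_mul]
  intro x hx y hy
  have h1 := hf.dist_le_mul x hx y hy
  have h2 := hg.dist_le_mul x hx y hy
  rw [Real.dist_eq] at h1 h2 ⊢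
  push_cast
  calc |f x - g x - (f y - g y)| = |(f x - f y) - (g x - g y)| := by ring_nf
    _ ≤ |f x - f y| + |g x - g y| := abs_sub _ _
    _ ≤ (Lf : ℝ) * |x - y| + (Lg : ℝ) * |x - y| := add_le_add h1 h2
    _ = ((Lf : ℝ) + (Lg : ℝ)) * |x - y| := by ring

set_option maxHeartbeats 4000000 in
/-- **Lemma 4.1 (comparison principle).** If `u̲` is a subsolution and `w̄` a supersolution of
`P_ε w = 0` on `(a,b) × (0,T)` (with the stated regularity, nonnegative and locally bounded
spatial derivatives, and locally Lipschitz spatial derivatives), correctly ordered on the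
parabolic boundary, then `u̲ ≤ w̄` on `(a,b) × (0,T)`. -/
theorem comparison_principle
    (n : ℕ) (hn : 1 ≤ n) (m μ : ℝ) (hm : 1 < m) (ε : ℝ) (hε : ε ∈ Ioo (0:ℝ) 1)
    (a b T : ℝ) (ha : 0 ≤ a) (hab : a < b) (hT : 0 < T)
    (ul ov : ℝ → ℝ → ℝ)
    (hul_cont : ContinuousOn (fun p : ℝ × ℝ => ul p.1 p.2) (Icc a b ×ˢ Ico 0 T))
    (hov_cont : ContinuousOn (fun p : ℝ × ℝ => ov p.1 p.2) (Icc a b ×ˢ Ico 0 T))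
    (hul_diff_s : ∀ s ∈ Ioo a b, ∀ t ∈ Ioo (0:ℝ) T, DifferentiableAt ℝ (fun σ => ul σ t) s)
    (hul_diff_t : ∀ s ∈ Ioo a b, ∀ t ∈ Ioo (0:ℝ) T, DifferentiableAt ℝ (fun τ => ul s τ) t)
    (hov_diff_s : ∀ s ∈ Ioo a b, ∀ t ∈ Ioo (0:ℝ) T, DifferentiableAt ℝ (fun σ => ov σ t) s)
    (hov_diff_t : ∀ s ∈ Ioo a b, ∀ t ∈ Ioo (0:ℝ) T, DifferentiableAt ℝ (fun τ => ov s τ) t)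
    (hul_ds_cont : ContinuousOn (fun p : ℝ × ℝ => deriv (fun σ => ul σ p.2) p.1)
      (Ioo a b ×ˢ Ioo 0 T))
    (hul_dt_cont : ContinuousOn (fun p : ℝ × ℝ => deriv (fun τ => ul p.1 τ) p.2)
      (Ioo a b ×ˢ Ioo 0 T))
    (hov_ds_cont : ContinuousOn (fun p : ℝ × ℝ => deriv (fun σ => ov σ p.2) p.1)
      (Ioo a b ×ˢ Ioo 0 T))
    (hov_dt_cont : ContinuousOn (fun p : ℝ × ℝ => deriv (fun τ => ov p.1 τ) p.2)
      (Ioo a b ×ˢ Ioo 0 T))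
    (hul_ds_locbdd : ∀ T' ∈ Ioo (0:ℝ) T, ∃ M, ∀ s ∈ Ioo a b, ∀ t ∈ Ioo (0:ℝ) T',
      |deriv (fun σ => ul σ t) s| ≤ M)
    (hov_ds_locbdd : ∀ T' ∈ Ioo (0:ℝ) T, ∃ M, ∀ s ∈ Ioo a b, ∀ t ∈ Ioo (0:ℝ) T',
      |deriv (fun σ => ov σ t) s| ≤ M)
    (hul_ds_nonneg : ∀ s ∈ Ioo a b, ∀ t ∈ Ioo (0:ℝ) T, 0 ≤ deriv (fun σ => ul σ t) s)
    (hov_ds_nonneg : ∀ s ∈ Ioo a b, ∀ t ∈ Ioo (0:ℝ) T, 0 ≤ deriv (fun σ => ov σ t) s)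
    (hul_lip : ∀ t ∈ Ioo (0:ℝ) T, ∀ K ⊆ Ioo a b, IsCompact K →
      ∃ L : NNReal, LipschitzOnWith L (deriv (fun σ => ul σ t)) K)
    (hov_lip : ∀ t ∈ Ioo (0:ℝ) T, ∀ K ⊆ Ioo a b, IsCompact K →
      ∃ L : NNReal, LipschitzOnWith L (deriv (fun σ => ov σ t)) K)
    (hsub : ∀ t ∈ Ioo (0:ℝ) T, ∀ᵐ s ∂volume, s ∈ Ioo a b →
      DifferentiableAt ℝ (deriv (fun σ => ul σ t)) s ∧ Peps n m μ ε ul s t ≤ 0)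
    (hsup : ∀ t ∈ Ioo (0:ℝ) T, ∀ᵐ s ∂volume, s ∈ Ioo a b →
      DifferentiableAt ℝ (deriv (fun σ => ov σ t)) s ∧ 0 ≤ Peps n m μ ε ov s t)
    (hinit : ∀ s ∈ Ioo a b, ul s 0 ≤ ov s 0)
    (hbdry : ∀ t ∈ Ioo (0:ℝ) T, ul a t ≤ ov a t ∧ ul b t ≤ ov b t) :
    ∀ s ∈ Ioo a b, ∀ t ∈ Ioo (0:ℝ) T, ul s t ≤ ov s t := by
  intro sstar hsstar tstar htstar
  by_contra hcon
  push_neg at hcon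
  -- time thresholds
  obtain ⟨T', hT'def⟩ : ∃ x : ℝ, x = (tstar + T) / 2 := ⟨_, rfl⟩
  have htT' : tstar < T' := by rw [hT'def]; linarith [htstar.2]
  have hT'T : T' < T := by rw [hT'def]; linarith [htstar.2]
  have hT'pos : 0 < T' := by rw [hT'def]; linarith [htstar.1]
  obtain ⟨T'', hT''def⟩ : ∃ x : ℝ, x = (T' + T) / 2 := ⟨_, rfl⟩
  have hT'T'' : T' < T'' := by rw [hT''def]; linarith
  have hT''T : T'' < T := by rw [hT''def]; linarith
  have hT''pos : 0 < T'' := by linarith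
  -- gradient bounds
  obtain ⟨Mu, hMu⟩ := hul_ds_locbdd T'' ⟨hT''pos, hT''T⟩
  obtain ⟨Mo, hMo⟩ := hov_ds_locbdd T'' ⟨hT''pos, hT''T⟩
  obtain ⟨M, hMdef⟩ : ∃ x : ℝ, x = max (max Mu Mo) 0 := ⟨_, rfl⟩
  have hM0 : 0 ≤ M := by rw [hMdef]; exact le_max_right _ _
  have hulM : ∀ s ∈ Ioo a b, ∀ t ∈ Ioo (0:ℝ) T'', deriv (fun σ => ul σ t) s ≤ M := by
    intro s hs t ht
    rw [hMdef]
    exact le_trans (le_of_abs_le (hMu s hs t ht)) (le_trans (le_max_left _ _) (le_max_left _ _))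
  have hovM : ∀ s ∈ Ioo a b, ∀ t ∈ Ioo (0:ℝ) T'', deriv (fun σ => ov σ t) s ≤ M := by
    intro s hs t ht
    rw [hMdef]
    exact le_trans (le_of_abs_le (hMo s hs t ht)) (le_trans (le_max_right _ _) (le_max_left _ _))
  -- the penalized functional
  obtain ⟨dstar, hdstardef⟩ : ∃ x : ℝ, x = ov sstar tstar - ul sstar tstar := ⟨_, rfl⟩
  have hdstar : dstar < 0 := by rw [hdstardef]; linarith
  obtain ⟨δ, hδdef⟩ : ∃ x : ℝ, x = Real.exp (-(M * tstar)) * (-dstar) / (2 * tstar) := ⟨_, rfl⟩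
  have hδ : 0 < δ := by
    rw [hδdef]
    exact div_pos (mul_pos (Real.exp_pos _) (by linarith)) (by linarith [htstar.1])
  obtain ⟨F, hFdef⟩ : ∃ F : ℝ × ℝ → ℝ,
      F = fun p => Real.exp (-(M * p.2)) * (ov p.1 p.2 - ul p.1 p.2) + δ * p.2 := ⟨_, rfl⟩
  obtain ⟨Q, hQdef⟩ : ∃ Q : Set (ℝ × ℝ), Q = Icc a b ×ˢ Icc 0 T' := ⟨_, rfl⟩
  have hQsub : Q ⊆ Icc a b ×ˢ Ico 0 T := by
    rw [hQdef]
    exact prod_mono subset_rfl (fun x hx => ⟨hx.1, lt_of_le_of_lt hx.2 hT'T⟩)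
  have hQcomp : IsCompact Q := by rw [hQdef]; exact isCompact_Icc.prod isCompact_Icc
  have hFcont : ContinuousOn F Q := by
    rw [hFdef]
    apply ContinuousOn.add
    · exact ((Real.continuous_exp.comp (continuous_const.mul continuous_snd).neg).continuousOn).mul
        ((hov_cont.mono hQsub).sub (hul_cont.mono hQsub))
    · exact (continuous_const.mul continuous_snd).continuousOn
  have hQne : Q.Nonempty := by
    rw [hQdef]
    exact ⟨(a, 0), ⟨⟨le_rfl, hab.le⟩, ⟨le_rfl, hT'pos.le⟩⟩⟩
  obtain ⟨⟨s0, t0⟩, hmemQ, hminF⟩ := hQcomp.exists_isMinOn hQne hFcont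
  have hminF' : ∀ p ∈ Q, F (s0, t0) ≤ F p := fun p hp => hminF hp
  rw [hQdef] at hmemQ
  have hstarQ : (sstar, tstar) ∈ Q := by
    rw [hQdef]
    exact ⟨⟨hsstar.1.le, hsstar.2.le⟩, ⟨htstar.1.le, htT'.le⟩⟩
  have hFneg : F (s0, t0) < 0 := by
    have h1 := hminF' _ hstarQ
    have htne : tstar ≠ 0 := ne_of_gt htstar.1
    have h2 : F (sstar, tstar) = Real.exp (-(M * tstar)) * dstar / 2 := by
      rw [hFdef, hδdef, hdstardef]
      simp only []
      field_simp
      ring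
    have h3 : Real.exp (-(M * tstar)) * dstar / 2 < 0 := by
      apply div_neg_of_neg_of_pos _ (by norm_num)
      exact mul_neg_of_pos_of_neg (Real.exp_pos _) hdstar
    exact lt_of_le_of_lt (h1.trans_eq h2) h3
  -- boundary nonnegativity
  have hbd0 : ∀ σ ∈ Icc a b, 0 ≤ ov σ 0 - ul σ 0 := by
    apply nonneg_on_Icc_of_Ioo hab
    · have hmap : MapsTo (fun σ : ℝ => (σ, (0:ℝ))) (Icc a b) (Icc a b ×ˢ Ico 0 T) :=
        fun σ hσ => ⟨hσ, ⟨le_rfl, hT⟩⟩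
      exact ((hov_cont.comp ((continuous_id.prodMk continuous_const).continuousOn) hmap).sub
        (hul_cont.comp ((continuous_id.prodMk continuous_const).continuousOn) hmap))
    · exact fun σ hσ => by linarith [hinit σ hσ]
  have hd_nonneg_bdry : ∀ σ ∈ Icc a b, ∀ τ ∈ Icc (0:ℝ) T',
      (σ = a ∨ σ = b ∨ τ = 0) → 0 ≤ ov σ τ - ul σ τ := by
    rintro σ hσ τ hτ (heq | heq | heq)
    · rw [heq]
      rcases eq_or_lt_of_le hτ.1 with h0 | h0
      · rw [← h0]; exact hbd0 a ⟨le_rfl, hab.le⟩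
      · linarith [(hbdry τ ⟨h0, lt_of_le_of_lt hτ.2 hT'T⟩).1]
    · rw [heq]
      rcases eq_or_lt_of_le hτ.1 with h0 | h0
      · rw [← h0]; exact hbd0 b ⟨hab.le, le_rfl⟩
      · linarith [(hbdry τ ⟨h0, lt_of_le_of_lt hτ.2 hT'T⟩).2]
    · rw [heq]; exact hbd0 σ hσ
  have hFbdry_nonneg : ∀ σ ∈ Icc a b, ∀ τ ∈ Icc (0:ℝ) T',
      (σ = a ∨ σ = b ∨ τ = 0) → 0 ≤ F (σ, τ) := by
    intro σ hσ τ hτ hcase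
    rw [hFdef]
    exact add_nonneg (mul_nonneg (Real.exp_pos _).le (hd_nonneg_bdry σ hσ τ hτ hcase))
      (mul_nonneg hδ.le hτ.1)
  have hs0 : s0 ∈ Ioo a b := by
    rcases eq_or_lt_of_le hmemQ.1.1 with h | h
    · exact absurd (hFbdry_nonneg s0 hmemQ.1 t0 hmemQ.2 (Or.inl h.symm)) (not_le.2 hFneg)
    rcases eq_or_lt_of_le hmemQ.1.2 with h2 | h2
    · exact absurd (hFbdry_nonneg s0 hmemQ.1 t0 hmemQ.2 (Or.inr (Or.inl h2))) (not_le.2 hFneg)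
    exact ⟨h, h2⟩
  have ht0 : 0 < t0 := by
    rcases eq_or_lt_of_le hmemQ.2.1 with h | h
    · exact absurd (hFbdry_nonneg s0 hmemQ.1 t0 hmemQ.2 (Or.inr (Or.inr h.symm))) (not_le.2 hFneg)
    exact h
  have ht0T' : t0 ≤ T' := hmemQ.2.2
  have ht0T : t0 < T := lt_of_le_of_lt ht0T' hT'T
  have ht0mem : t0 ∈ Ioo (0:ℝ) T := ⟨ht0, ht0T⟩
  have ht0T'' : t0 ∈ Ioo (0:ℝ) T'' := ⟨ht0, lt_of_le_of_lt ht0T' hT'T''⟩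
  obtain ⟨D0, hD0def⟩ : ∃ x : ℝ, x = ov s0 t0 - ul s0 t0 := ⟨_, rfl⟩
  have hFneg' : Real.exp (-(M * t0)) * D0 + δ * t0 < 0 := by
    rw [hD0def]
    have := hFneg
    rw [hFdef] at this
    exact this
  have hD0 : D0 < 0 := by
    by_contra h
    push_neg at h
    have h1 : 0 ≤ Real.exp (-(M * t0)) * D0 := mul_nonneg (Real.exp_pos _).le h
    linarith [mul_nonneg hδ.le ht0.le]
  -- spatial minimality
  have hmins : ∀ σ ∈ Icc a b, D0 ≤ ov σ t0 - ul σ t0 := by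
    intro σ hσ
    have h1 := hminF' (σ, t0) (by rw [hQdef]; exact ⟨hσ, hmemQ.2⟩)
    rw [hFdef] at h1
    simp only [] at h1
    rw [hD0def]
    have hE := Real.exp_pos (-(M * t0))
    have h2 : Real.exp (-(M * t0)) * (ov s0 t0 - ul s0 t0)
        ≤ Real.exp (-(M * t0)) * (ov σ t0 - ul σ t0) := by linarith [h1]
    exact (mul_le_mul_iff_right₀ hE).1 h2
  -- zero spatial derivative at the minimum
  have hds0 : deriv (fun σ => ov σ t0) s0 - deriv (fun σ => ul σ t0) s0 = 0 := by
    have hloc : IsLocalMin (fun σ => ov σ t0 - ul σ t0) s0 := by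
      filter_upwards [Icc_mem_nhds hs0.1 hs0.2] with σ hσ
      have h1 := hmins σ hσ
      rw [hD0def] at h1
      exact h1
    have h1 := hloc.deriv_eq_zero
    rw [deriv_fun_sub (hov_diff_s s0 hs0 t0 ht0mem) (hul_diff_s s0 hs0 t0 ht0mem)] at h1
    exact h1
  -- time derivative inequality
  have hDT : deriv (fun τ => ov s0 τ) t0 - deriv (fun τ => ul s0 τ) t0 ≤ M * D0 - δ := by
    have h1 : HasDerivAt (fun τ : ℝ => -(M * τ)) (-M) t0 := by
      simpa using (((hasDerivAt_id t0).const_mul M).fun_neg)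
    have hexp : HasDerivAt (fun τ : ℝ => Real.exp (-(M * τ)))
        (Real.exp (-(M * t0)) * (-M)) t0 := h1.exp
    have hdov : HasDerivAt (fun τ => ov s0 τ) (deriv (fun τ => ov s0 τ) t0) t0 :=
      (hov_diff_t s0 hs0 t0 ht0mem).hasDerivAt
    have hdul : HasDerivAt (fun τ => ul s0 τ) (deriv (fun τ => ul s0 τ) t0) t0 :=
      (hul_diff_t s0 hs0 t0 ht0mem).hasDerivAt
    have hφd : HasDerivAt (fun τ => Real.exp (-(M * τ)) * (ov s0 τ - ul s0 τ) + δ * τ)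
        ((Real.exp (-(M * t0)) * (-M)) * (ov s0 t0 - ul s0 t0)
          + Real.exp (-(M * t0)) * (deriv (fun τ => ov s0 τ) t0 - deriv (fun τ => ul s0 τ) t0)
          + δ) t0 := by
      have := (hexp.fun_mul (hdov.fun_sub hdul)).fun_add ((hasDerivAt_id t0).const_mul δ)
      simpa [mul_comm] using this
    have hminφ : ∀ τ ∈ Icc 0 t0, (fun τ => Real.exp (-(M * τ)) * (ov s0 τ - ul s0 τ) + δ * τ) t0
        ≤ (fun τ => Real.exp (-(M * τ)) * (ov s0 τ - ul s0 τ) + δ * τ) τ := by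
      intro τ hτ
      have hQm : (s0, τ) ∈ Q := by
        rw [hQdef]; exact ⟨hmemQ.1, ⟨hτ.1, le_trans hτ.2 ht0T'⟩⟩
      have := hminF' (s0, τ) hQm
      rw [hFdef] at this
      exact this
    have hφ0 := deriv_nonpos_of_isMinOn_left ht0 hφd hminφ
    rw [hD0def]
    -- rearrange
    obtain ⟨E, hEdef⟩ : ∃ x : ℝ, x = Real.exp (-(M * t0)) := ⟨_, rfl⟩
    obtain ⟨E', hE'def⟩ : ∃ x : ℝ, x = Real.exp (M * t0) := ⟨_, rfl⟩
    have hEE' : E * E' = 1 := by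
      rw [hEdef, hE'def, ← Real.exp_add]; simp
    have hEpos : 0 < E := hEdef ▸ Real.exp_pos _
    have hE'1 : 1 ≤ E' := hE'def ▸ Real.one_le_exp (mul_nonneg hM0 ht0.le)
    have hφ0' : E * (-M) * (ov s0 t0 - ul s0 t0)
        + E * (deriv (fun τ => ov s0 τ) t0 - deriv (fun τ => ul s0 τ) t0) + δ ≤ 0 := by
      rw [hEdef]; exact hφ0
    have h8 : E * (M * (ov s0 t0 - ul s0 t0)
        - δ * E') = E * M * (ov s0 t0 - ul s0 t0) - δ * (E * E') := by ring
    have h5 : E * (deriv (fun τ => ov s0 τ) t0 - deriv (fun τ => ul s0 τ) t0)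
        ≤ E * (M * (ov s0 t0 - ul s0 t0) - δ * E') := by
      rw [h8, hEE', mul_one]; linarith [hφ0']
    have h7 := (mul_le_mul_iff_right₀ hEpos).1 h5
    have h9 : δ * 1 ≤ δ * E' := mul_le_mul_of_nonneg_left hE'1 hδ.le
    rw [mul_one] at h9
    linarith
  -- spatial neighborhood and Lipschitz constants
  obtain ⟨r0, hr0def⟩ : ∃ r0 : ℝ, r0 = min (s0 - a) (b - s0) / 2 := ⟨_, rfl⟩
  have hr0pos : 0 < r0 := by
    rw [hr0def]
    have h1 := hs0.1; have h2 := hs0.2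
    exact div_pos (lt_min (by linarith) (by linarith)) (by norm_num)
  have hr0a : a < s0 - r0 := by
    have h1 : min (s0 - a) (b - s0) ≤ s0 - a := min_le_left _ _
    have h2 := hs0.1
    rw [hr0def]
    linarith
  have hr0b : s0 + r0 < b := by
    have h1 : min (s0 - a) (b - s0) ≤ b - s0 := min_le_right _ _
    have h2 := hs0.2
    rw [hr0def]
    linarith
  obtain ⟨K, hKdef⟩ : ∃ K : Set ℝ, K = Icc (s0 - r0) (s0 + r0) := ⟨_, rfl⟩
  have hKsub : K ⊆ Ioo a b := by
    rw [hKdef]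
    exact fun x hx => ⟨lt_of_lt_of_le hr0a hx.1, lt_of_le_of_lt hx.2 hr0b⟩
  have hKcomp : IsCompact K := by rw [hKdef]; exact isCompact_Icc
  obtain ⟨Lu, hLu⟩ := hul_lip t0 ht0mem K hKsub hKcomp
  obtain ⟨Lo, hLo⟩ := hov_lip t0 ht0mem K hKsub hKcomp
  -- constants
  obtain ⟨mb, hmbdef⟩ : ∃ mb : ℝ, mb = max 1 b := ⟨_, rfl⟩
  have hmb1 : (1:ℝ) ≤ mb := hmbdef ▸ le_max_left _ _
  have hbmb : b ≤ mb := hmbdef ▸ le_max_right _ _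
  obtain ⟨Amax, hAmaxdef⟩ : ∃ A : ℝ, A = (n:ℝ)^2 * mb^2 := ⟨_, rfl⟩
  have hAmax0 : 0 ≤ Amax := by rw [hAmaxdef]; positivity
  obtain ⟨P, hPdef⟩ : ∃ P : ℝ, P = (M + 1) ^ (m - 1) := ⟨_, rfl⟩
  have hP0 : 0 < P := by rw [hPdef]; exact Real.rpow_pos_of_pos (by linarith) _
  obtain ⟨CL, hCLdef⟩ : ∃ C : ℝ, C = (m - 1) * max (ε ^ (m - 2)) ((M + ε) ^ (m - 2)) := ⟨_, rfl⟩
  have hCL0 : 0 ≤ CL := by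
    rw [hCLdef]
    exact mul_nonneg (by linarith)
      (le_trans (Real.rpow_pos_of_pos hε.1 _).le (le_max_left _ _))
  obtain ⟨Co, hCodef⟩ : ∃ C : ℝ, C = |ov s0 t0| + 1 := ⟨_, rfl⟩
  have hCo0 : 0 < Co := by rw [hCodef]; positivity
  obtain ⟨Ctot, hCtotdef⟩ : ∃ C : ℝ, C = Amax * CL * (Lu:ℝ) + Co + |μ| * mb := ⟨_, rfl⟩
  have hCtot0 : 0 ≤ Ctot := by
    rw [hCtotdef]
    have h1 : (0:ℝ) ≤ (Lu:ℝ) := Lu.coe_nonneg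
    have h2 : (0:ℝ) ≤ |μ| * mb := mul_nonneg (abs_nonneg _) (by linarith)
    have h3 : (0:ℝ) ≤ Amax * CL * (Lu:ℝ) := mul_nonneg (mul_nonneg hAmax0 hCL0) h1
    linarith
  obtain ⟨η', hη'def⟩ : ∃ e : ℝ, e = δ / (4 * (Amax * P + 1)) := ⟨_, rfl⟩
  have hη'pos : 0 < η' := by
    rw [hη'def]
    exact div_pos hδ (by linarith [mul_nonneg hAmax0 hP0.le])
  obtain ⟨εds, hεdsdef⟩ : ∃ e : ℝ, e = δ / (4 * (Ctot + 1)) := ⟨_, rfl⟩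
  have hεds : 0 < εds := by
    rw [hεdsdef]
    exact div_pos hδ (by linarith [hCtot0])
  -- continuity in the spatial variable at s0, at fixed time t0
  have hmapI : MapsTo (fun σ : ℝ => (σ, t0)) (Ioo a b) (Ioo a b ×ˢ Ioo 0 T) :=
    fun σ hσ => ⟨hσ, ht0mem⟩
  have hg1cont : ContinuousAt
      (fun σ => deriv (fun τ => ov σ τ) t0 - deriv (fun τ => ul σ τ) t0) s0 := by
    have h1 : ContinuousOn (fun σ => deriv (fun τ => ov σ τ) t0) (Ioo a b) :=
      hov_dt_cont.comp ((continuous_id.prodMk continuous_const).continuousOn) hmapI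
    have h2 : ContinuousOn (fun σ => deriv (fun τ => ul σ τ) t0) (Ioo a b) :=
      hul_dt_cont.comp ((continuous_id.prodMk continuous_const).continuousOn) hmapI
    exact ((h1.sub h2).continuousAt (Ioo_mem_nhds hs0.1 hs0.2))
  have hg2cont : ContinuousAt
      (fun σ => deriv (fun σ' => ov σ' t0) σ - deriv (fun σ' => ul σ' t0) σ) s0 := by
    have h1 : ContinuousOn (fun σ => deriv (fun σ' => ov σ' t0) σ) (Ioo a b) :=
      hov_ds_cont.comp ((continuous_id.prodMk continuous_const).continuousOn) hmapI
    have h2 : ContinuousOn (fun σ => deriv (fun σ' => ul σ' t0) σ) (Ioo a b) :=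
      hul_ds_cont.comp ((continuous_id.prodMk continuous_const).continuousOn) hmapI
    exact ((h1.sub h2).continuousAt (Ioo_mem_nhds hs0.1 hs0.2))
  have hg3cont : ContinuousAt (fun σ => ov σ t0) s0 := by
    have hmapI' : MapsTo (fun σ : ℝ => (σ, t0)) (Icc a b) (Icc a b ×ˢ Ico 0 T) :=
      fun σ hσ => ⟨hσ, ⟨ht0.le, ht0T⟩⟩
    have h1 : ContinuousOn (fun σ => ov σ t0) (Icc a b) :=
      hov_cont.comp ((continuous_id.prodMk continuous_const).continuousOn) hmapI'
    exact h1.continuousAt (Icc_mem_nhds hs0.1 hs0.2)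
  -- eventual bounds near s0
  have he1 : ∀ᶠ σ in nhds s0,
      deriv (fun τ => ov σ τ) t0 - deriv (fun τ => ul σ τ) t0 < M * D0 - δ + δ/4 := by
    refine hg1cont.tendsto.eventually_lt_const ?_
    linarith [hDT]
  have he2 : ∀ᶠ σ in nhds s0,
      |deriv (fun σ' => ov σ' t0) σ - deriv (fun σ' => ul σ' t0) σ| < εds := by
    have h1 : Tendsto (fun σ => |deriv (fun σ' => ov σ' t0) σ - deriv (fun σ' => ul σ' t0) σ|)
        (nhds s0) (nhds |deriv (fun σ' => ov σ' t0) s0 - deriv (fun σ' => ul σ' t0) s0|) :=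
      hg2cont.abs.tendsto
    refine h1.eventually_lt_const ?_
    rw [hds0, abs_zero]
    exact hεds
  have he3 : ∀ᶠ σ in nhds s0, |ov σ t0| < Co := by
    have h1 : Tendsto (fun σ => |ov σ t0|) (nhds s0) (nhds |ov s0 t0|) := hg3cont.abs.tendsto
    refine h1.eventually_lt_const ?_
    rw [hCodef]; linarith
  obtain ⟨r, hrpos, hball⟩ := Metric.eventually_nhds_iff.1 ((he1.and he2).and he3)
  obtain ⟨r1, hr1def⟩ : ∃ r1 : ℝ, r1 = min r r0 := ⟨_, rfl⟩
  have hr1pos : 0 < r1 := by rw [hr1def]; exact lt_min hrpos hr0pos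
  have hr1r : r1 ≤ r := hr1def ▸ min_le_left _ _
  have hr1r0 : r1 ≤ r0 := hr1def ▸ min_le_right _ _
  have hsubI : Ioo (s0 - r1) s0 ⊆ Ioo a b :=
    fun x hx => ⟨by linarith [hx.1, hr1r0, hr0a], lt_trans hx.2 hs0.2⟩
  -- THE CLAIM: existence of a good comparison point
  have hclaim : ∃ s, s ∈ Ioo (s0 - r1) s0 ∧
      DifferentiableAt ℝ (deriv (fun σ => ul σ t0)) s ∧
      DifferentiableAt ℝ (deriv (fun σ => ov σ t0)) s ∧
      Peps n m μ ε ul s t0 ≤ 0 ∧ 0 ≤ Peps n m μ ε ov s t0 ∧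
      -η' ≤ deriv (deriv (fun σ => ov σ t0)) s - deriv (deriv (fun σ => ul σ t0)) s := by
    by_contra hno
    push_neg at hno
    have hvpos : ∀ σ ∈ Ioo (s0 - r1) s0,
        η' * (s0 - σ) ≤ deriv (fun σ' => ov σ' t0) σ - deriv (fun σ' => ul σ' t0) σ := by
      intro σ hσ
      have hKmono : Icc σ s0 ⊆ K := by
        rw [hKdef]
        exact Icc_subset_Icc (by linarith [hσ.1, hr1r0]) (by linarith [hr0pos])
      have hlipv : LipschitzOnWith (Lo + Lu)
          (fun x => deriv (fun σ' => ov σ' t0) x - deriv (fun σ' => ul σ' t0) x) (Icc σ s0) :=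
        (lipschitzOnWith_sub hLo hLu).mono hKmono
      have hae : ∀ᵐ x ∂(volume : Measure ℝ), x ∈ Ioo σ s0 →
          DifferentiableAt ℝ
            (fun x => deriv (fun σ' => ov σ' t0) x - deriv (fun σ' => ul σ' t0) x) x ∧
          deriv (fun x => deriv (fun σ' => ov σ' t0) x - deriv (fun σ' => ul σ' t0) x) x
            ≤ -η' := by
        filter_upwards [hsub t0 ht0mem, hsup t0 ht0mem] with x hx1 hx2 hxI
        have hxI' : x ∈ Ioo (s0 - r1) s0 := ⟨by linarith [hσ.1, hxI.1], hxI.2⟩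
        have hxab : x ∈ Ioo a b := hsubI hxI'
        obtain ⟨hdu, hPu⟩ := hx1 hxab
        obtain ⟨hdo, hPo⟩ := hx2 hxab
        refine ⟨hdo.sub hdu, ?_⟩
        rw [deriv_fun_sub hdo hdu]
        exact le_of_lt (hno x hxI' hdu hdo hPu hPo)
      have hkey := lipschitz_sub_le_of_ae_deriv_le hσ.2 hlipv hae
      rw [hds0] at hkey
      linarith [hkey]
    -- mean value theorem contradiction
    have hpmem : ∀ x ∈ Icc (s0 - r1/2) s0, x ∈ Ioo a b := by
      intro x hx
      constructor
      · have h1 : a < s0 - r1 := by linarith [hr1r0, hr0a]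
        linarith [hx.1]
      · exact lt_of_le_of_lt hx.2 hs0.2
    have hfc : ContinuousOn (fun σ => ov σ t0 - ul σ t0) (Icc (s0 - r1/2) s0) :=
      fun x hx => (((hov_diff_s x (hpmem x hx) t0 ht0mem).sub
        (hul_diff_s x (hpmem x hx) t0 ht0mem)).continuousAt).continuousWithinAt
    have hfd : ∀ x ∈ Ioo (s0 - r1/2) s0, HasDerivAt (fun σ => ov σ t0 - ul σ t0)
        (deriv (fun σ' => ov σ' t0) x - deriv (fun σ' => ul σ' t0) x) x := by
      intro x hx
      have hxab : x ∈ Ioo a b := hpmem x ⟨hx.1.le, hx.2.le⟩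
      exact ((hov_diff_s x hxab t0 ht0mem).hasDerivAt.sub
        (hul_diff_s x hxab t0 ht0mem).hasDerivAt)
    obtain ⟨cpt, hcpt, hceq⟩ := exists_hasDerivAt_eq_slope (fun σ => ov σ t0 - ul σ t0)
      _ (by linarith : s0 - r1/2 < s0) hfc hfd
    have hcpt' : cpt ∈ Ioo (s0 - r1) s0 := ⟨by linarith [hcpt.1], hcpt.2⟩
    have hv1 := hvpos cpt hcpt'
    rw [hceq] at hv1
    have hnum : (fun σ => ov σ t0 - ul σ t0) s0 - (fun σ => ov σ t0 - ul σ t0) (s0 - r1/2)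
        ≤ 0 := by
      simp only []
      have h1 := hmins (s0 - r1/2) ⟨by linarith [hr1r0, hr0a], by linarith [hs0.2]⟩
      simp only [hD0def] at h1
      linarith
    have hden : (0:ℝ) ≤ s0 - (s0 - r1/2) := by linarith
    have hq := div_nonpos_of_nonpos_of_nonneg hnum hden
    have hpos : (0:ℝ) < η' * (s0 - cpt) := mul_pos hη'pos (by linarith [hcpt.2])
    linarith
  -- use the good point to derive the contradiction
  obtain ⟨s, hsI, hdu2, hdo2, hPu, hPo, hERR⟩ := hclaim
  have hsab : s ∈ Ioo a b := hsubI hsI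
  have hdist : dist s s0 < r := by
    rw [Real.dist_eq, abs_of_neg (by linarith [hsI.2] : s - s0 < 0)]
    linarith [hsI.1, hr1r]
  obtain ⟨⟨hb1, hb2⟩, hb3⟩ := hball hdist
  -- unfold the operator
  rw [Peps] at hPu hPo
  -- abbreviations
  set u1 : ℝ := deriv (fun σ => ul σ t0) s with hu1def
  set o1 : ℝ := deriv (fun σ => ov σ t0) s with ho1def
  set u2 : ℝ := deriv (deriv (fun σ => ul σ t0)) s with hu2def
  set o2 : ℝ := deriv (deriv (fun σ => ov σ t0)) s with ho2def
  set dtu : ℝ := deriv (fun τ => ul s τ) t0 with hdtudef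
  set dto : ℝ := deriv (fun τ => ov s τ) t0 with hdtodef
  set du : ℝ := ul s t0 with hdudef
  set dov : ℝ := ov s t0 with hdovdef
  set A : ℝ := (n:ℝ)^2 * s ^ ((2:ℝ) - 2/(n:ℝ)) with hAdef
  -- basic bounds
  have hu1nn : 0 ≤ u1 := hul_ds_nonneg s hsab t0 ht0mem
  have hu1M : u1 ≤ M := hulM s hsab t0 ht0T''
  have ho1nn : 0 ≤ o1 := hov_ds_nonneg s hsab t0 ht0mem
  have ho1M : o1 ≤ M := hovM s hsab t0 ht0T''
  have hKnhds : K ∈ nhds s := by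
    rw [hKdef]
    refine mem_of_superset (isOpen_Ioo.mem_nhds ?_) Ioo_subset_Icc_self
    exact ⟨by linarith [hsI.1, hr1r0], by linarith [hsI.2, hr0pos]⟩
  have hu2L : |u2| ≤ (Lu:ℝ) := abs_deriv_le_of_lipschitzOnWith hKnhds hLu hdu2
  have hs_pos : 0 < s := lt_of_le_of_lt ha hsab.1
  have hs_mb : s ≤ mb := le_trans hsab.2.le hbmb
  have hn1 : (1:ℝ) ≤ (n:ℝ) := by exact_mod_cast hn
  have he0 : 0 ≤ (2:ℝ) - 2/(n:ℝ) := by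
    have h1 : 2/(n:ℝ) ≤ 2 := by
      rw [div_le_iff₀ (by linarith)]
      linarith [hn1]
    linarith
  have he2 : (2:ℝ) - 2/(n:ℝ) ≤ 2 := by
    have h1 : 0 ≤ 2/(n:ℝ) := by positivity
    linarith
  have hA0 : 0 ≤ A := by
    rw [hAdef]
    exact mul_nonneg (by positivity) (Real.rpow_nonneg hs_pos.le _)
  have hAmaxb : A ≤ Amax := by
    rw [hAdef, hAmaxdef]
    have h1 : s ^ ((2:ℝ) - 2/(n:ℝ)) ≤ mb ^ ((2:ℝ) - 2/(n:ℝ)) :=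
      Real.rpow_le_rpow hs_pos.le hs_mb he0
    have h2 : mb ^ ((2:ℝ) - 2/(n:ℝ)) ≤ mb ^ (2:ℝ) :=
      Real.rpow_le_rpow_of_exponent_le hmb1 he2
    have h3 : mb ^ (2:ℝ) = mb^2 := by
      rw [show (2:ℝ) = ((2:ℕ):ℝ) by norm_num, Real.rpow_natCast]
    exact mul_le_mul_of_nonneg_left (by rw [← h3]; exact le_trans h1 h2) (by positivity)
  have hrpO : (o1 + ε) ^ (m-1) ≤ P := by
    rw [hPdef]
    exact Real.rpow_le_rpow (by linarith [hε.1]) (by linarith [hε.2]) (by linarith)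
  have hrpOpos : 0 < (o1 + ε) ^ (m-1) := Real.rpow_pos_of_pos (by linarith [hε.1]) _
  have hCLd : |(o1 + ε) ^ (m-1) - (u1 + ε) ^ (m-1)| ≤ CL * |o1 - u1| := by
    rw [hCLdef]
    exact rpow_shift_lipschitz hm hε.1 ⟨ho1nn, ho1M⟩ ⟨hu1nn, hu1M⟩
  -- bracket lower bound
  have ht1 : -(P * η') ≤ (o1 + ε) ^ (m-1) * (o2 - u2) := by
    linarith [mul_nonneg (sub_nonneg.2 hrpO) hη'pos.le,
      mul_nonneg hrpOpos.le (show 0 ≤ (o2 - u2) + η' by linarith [hERR])]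
  have ht2 : -(CL * (Lu:ℝ) * |o1 - u1|) ≤ ((o1 + ε) ^ (m-1) - (u1 + ε) ^ (m-1)) * u2 := by
    have h1 : |((o1 + ε) ^ (m-1) - (u1 + ε) ^ (m-1)) * u2| ≤ (CL * |o1 - u1|) * (Lu:ℝ) := by
      rw [abs_mul]
      exact mul_le_mul hCLd hu2L (abs_nonneg _) (mul_nonneg hCL0 (abs_nonneg _))
    have h2 := neg_abs_le (((o1 + ε) ^ (m-1) - (u1 + ε) ^ (m-1)) * u2)
    linarith [h1, h2]
  have hB : -(P * η' + CL * (Lu:ℝ) * |o1 - u1|)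
      ≤ (o1 + ε) ^ (m-1) * o2 - (u1 + ε) ^ (m-1) * u2 := by linarith [ht1, ht2]
  have hABX : 0 ≤ P * η' + CL * (Lu:ℝ) * |o1 - u1| :=
    add_nonneg (mul_nonneg hP0.le hη'pos.le)
      (mul_nonneg (mul_nonneg hCL0 Lu.coe_nonneg) (abs_nonneg _))
  have hAB : -(A * ((o1 + ε) ^ (m-1) * o2 - (u1 + ε) ^ (m-1) * u2))
      ≤ Amax * (P * η' + CL * (Lu:ℝ) * |o1 - u1|) := by
    have h1 : 0 ≤ A * ((P * η' + CL * (Lu:ℝ) * |o1 - u1|)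
        + ((o1 + ε) ^ (m-1) * o2 - (u1 + ε) ^ (m-1) * u2)) :=
      mul_nonneg hA0 (by linarith [hB])
    have h2 : A * (P * η' + CL * (Lu:ℝ) * |o1 - u1|)
        ≤ Amax * (P * η' + CL * (Lu:ℝ) * |o1 - u1|) :=
      mul_le_mul_of_nonneg_right hAmaxb hABX
    linarith [h1, h2]
  -- zeroth order terms
  have hdd : D0 ≤ dov - du := by
    have := hmins s ⟨hsab.1.le, hsab.2.le⟩
    rw [hdovdef, hdudef]
    exact this
  have ht3 : -(dov * (o1 - u1)) ≤ Co * |o1 - u1| := by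
    have h4 : |dov * (o1 - u1)| = |dov| * |o1 - u1| := abs_mul _ _
    have h5 : |dov| * |o1 - u1| ≤ Co * |o1 - u1| :=
      mul_le_mul_of_nonneg_right hb3.le (abs_nonneg _)
    have h6 := neg_abs_le (dov * (o1 - u1))
    linarith
  have hbig : -(dov * o1 - du * u1) ≤ Co * |o1 - u1| + M * (-D0) := by
    have t1 : 0 ≤ ((dov - du) - D0) * u1 := mul_nonneg (by linarith) hu1nn
    have t2 : 0 ≤ (-D0) * (M - u1) := mul_nonneg (by linarith [hD0]) (by linarith)
    linarith [t1, t2, ht3]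
  have hmu : μ * s * (o1 - u1) ≤ |μ| * mb * |o1 - u1| := by
    have h1 : μ * s * (o1 - u1) ≤ |μ * s * (o1 - u1)| := le_abs_self _
    have h2 : |μ * s * (o1 - u1)| = |μ| * |s| * |o1 - u1| := by rw [abs_mul, abs_mul]
    have h3 : |s| ≤ mb := by rw [abs_of_pos hs_pos]; exact hs_mb
    have h4 : |μ| * |s| * |o1 - u1| ≤ |μ| * mb * |o1 - u1| :=
      mul_le_mul_of_nonneg_right (mul_le_mul_of_nonneg_left h3 (abs_nonneg _)) (abs_nonneg _)
    linarith
  -- combine the two differential inequalities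
  have hdiffP : 0 ≤ (dto - dtu) - A * ((o1 + ε) ^ (m-1) * o2 - (u1 + ε) ^ (m-1) * u2)
      - (dov * o1 - du * u1) + μ * s * (o1 - u1) := by linarith [hPu, hPo]
  -- smallness of the error terms
  have hη'b : Amax * P * η' ≤ δ/4 := by
    have hW : 0 ≤ Amax * P := mul_nonneg hAmax0 hP0.le
    have h1 : Amax * P * η' = (Amax * P * δ) / (4 * (Amax * P + 1)) := by
      rw [hη'def]; ring
    rw [h1, div_le_div_iff₀ (by linarith [mul_nonneg hAmax0 hP0.le]) (by norm_num)]
    linarith [hδ.le]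
  have hCexp : Ctot * |o1 - u1| = Amax * (CL * (Lu:ℝ) * |o1 - u1|)
      + Co * |o1 - u1| + |μ| * mb * |o1 - u1| := by
    rw [hCtotdef]; ring
  have hdsb : Amax * (CL * (Lu:ℝ) * |o1 - u1|) + Co * |o1 - u1| + |μ| * mb * |o1 - u1|
      ≤ δ/4 := by
    rw [← hCexp]
    have h1 : Ctot * |o1 - u1| ≤ Ctot * εds := mul_le_mul_of_nonneg_left hb2.le hCtot0
    have h2 : Ctot * εds = (Ctot * δ) / (4 * (Ctot + 1)) := by rw [hεdsdef]; ring
    have h3 : (Ctot * δ) / (4 * (Ctot + 1)) ≤ δ/4 := by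
      rw [div_le_div_iff₀ (by linarith [hCtot0]) (by norm_num)]
      linarith [hδ.le]
    linarith
  have hAmaxdistrib : Amax * (P * η' + CL * (Lu:ℝ) * |o1 - u1|)
      = Amax * P * η' + Amax * (CL * (Lu:ℝ) * |o1 - u1|) := by ring
  -- final contradiction
  linarith [hdiffP, hAB, hbig, hmu, hb1, hη'b, hdsb, hAmaxdistrib, hδ]
end

section
/- Let n ≥ 1 be an integer, m > 1, 0 < r₀ < r₁ < R and A > 0. Let u₀ : [0,R] → ℝ be bounded, measurable and nonnegative with u₀(ρ) = 0 for a.e. ρ ∈ (r₁, R), and suppose u₀(ρ) ≤ A(r₁ − ρ)^{1/(m−1)} for a.e. ρ ∈ (r₀, r₁). Let w₀ be the mass accumulation function of u₀ and set M := n∫₀^R ρ^{n−1}u₀(ρ)dρ. Then for all s ∈ (r₀ⁿ, r₁ⁿ): w₀(s) ≥ M − (A·n^{−1/(m−1)}·r₀^{−(n−1)m/(m−1)}·r₁^{n−1}·(m−1)/m)·(r₁ⁿ − s)^{m/(m−1)}. -/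
open Set MeasureTheory Filter

/-- The mass accumulation function of `u₀`: `w₀(s) = n ∫₀^{s^{1/n}} ρ^{n−1} u₀(ρ) dρ`. -/
noncomputable def massAccum (n : ℕ) (u₀ : ℝ → ℝ) (s : ℝ) : ℝ :=
  (n : ℝ) * ∫ ρ in (0:ℝ)..(s ^ ((n : ℝ)⁻¹)), ρ ^ (n - 1) * u₀ ρ

/-- **Lemma 3.1, first part**: if `u₀(ρ) ≤ A(r₁ − ρ)^{1/(m−1)}` a.e. on `(r₀, r₁)` and `u₀`
vanishes a.e. on `(r₁, R)`, then the mass accumulation function satisfies the lower bound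
`w₀(s) ≥ M − (A n^{−1/(m−1)} r₀^{−(n−1)m/(m−1)} r₁^{n−1} (m−1)/m)(r₁ⁿ − s)^{m/(m−1)}`. -/
theorem massAccum_lower_bound
    (n : ℕ) (hn : 1 ≤ n) (m : ℝ) (hm : 1 < m) (r₀ r₁ R A : ℝ)
    (hr₀ : 0 < r₀) (h01 : r₀ < r₁) (h1R : r₁ < R) (hA : 0 < A)
    (u₀ : ℝ → ℝ) (hmeas : Measurable u₀)
    (hbdd : ∃ M, ∀ ρ ∈ Icc (0:ℝ) R, u₀ ρ ≤ M)
    (hnonneg : ∀ ρ ∈ Icc (0:ℝ) R, 0 ≤ u₀ ρ)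
    (hsupp : ∀ᵐ ρ ∂volume, ρ ∈ Ioo r₁ R → u₀ ρ = 0)
    (hflat : ∀ᵐ ρ ∂volume, ρ ∈ Ioo r₀ r₁ → u₀ ρ ≤ A * (r₁ - ρ) ^ (1 / (m - 1))) :
    ∀ s ∈ Ioo (r₀ ^ n) (r₁ ^ n),
      (n : ℝ) * (∫ ρ in (0:ℝ)..R, ρ ^ (n - 1) * u₀ ρ)
          - A * (n : ℝ) ^ (-(1 / (m - 1))) * r₀ ^ (-(((n : ℝ) - 1) * m / (m - 1)))
            * r₁ ^ (n - 1) * (m - 1) / m * (r₁ ^ n - s) ^ (m / (m - 1))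
        ≤ massAccum n u₀ s := by
  obtain ⟨B, hB⟩ := hbdd
  intro s hs
  have hm1 : (0:ℝ) < m - 1 := by linarith
  have hn0 : n ≠ 0 := by omega
  have hn' : (0:ℝ) < n := by exact_mod_cast Nat.pos_of_ne_zero hn0
  set p := 1 / (m - 1) with hp_def
  have hp : 0 < p := by positivity
  set q := m / (m - 1) with hq_def
  have hq : 0 < q := by positivity
  have hqp : q = p + 1 := by rw [hq_def, hp_def]; field_simp; ring
  have hR : (0:ℝ) < R := by linarith
  have hs_pos : 0 < s := lt_trans (by positivity) hs.1
  set σ := s ^ ((n:ℝ)⁻¹) with hσ_def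
  have hσn : σ ^ n = s := Real.rpow_inv_natCast_pow hs_pos.le hn0
  have hσ₀ : r₀ < σ := by
    have := Real.rpow_lt_rpow (by positivity) hs.1 (by positivity : (0:ℝ) < (n:ℝ)⁻¹)
    rwa [Real.pow_rpow_inv_natCast hr₀.le hn0] at this
  have hσ1 : σ < r₁ := by
    have := Real.rpow_lt_rpow hs_pos.le hs.2 (by positivity : (0:ℝ) < (n:ℝ)⁻¹)
    rwa [Real.pow_rpow_inv_natCast (by linarith : (0:ℝ) ≤ r₁) hn0] at this
  have hσ_pos : 0 < σ := lt_trans hr₀ hσ₀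
  set f : ℝ → ℝ := fun ρ => ρ ^ (n - 1) * u₀ ρ with hf_def
  have hfmeas : Measurable f := (measurable_id.pow_const _).mul hmeas
  -- integrability of f on [0, R]
  have hIntOn : IntegrableOn f (Icc 0 R) volume := by
    apply Measure.integrableOn_of_bounded (M := R ^ (n - 1) * B)
    · exact (measure_Icc_lt_top).ne
    · exact hfmeas.aestronglyMeasurable
    · filter_upwards [ae_restrict_mem measurableSet_Icc] with ρ hρ
      have h1 := hnonneg ρ hρ
      have h2 := hB ρ hρ
      rw [Real.norm_eq_abs, abs_of_nonneg (mul_nonneg (pow_nonneg hρ.1 _) h1)]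
      exact mul_le_mul (pow_le_pow_left₀ hρ.1 hρ.2 _) h2 h1 (pow_nonneg (le_trans hρ.1 hρ.2) _)
  have hII : ∀ a b : ℝ, a ∈ Icc (0:ℝ) R → b ∈ Icc (0:ℝ) R →
      IntervalIntegrable f volume a b := by
    intro a b ha hb
    rw [intervalIntegrable_iff]
    apply hIntOn.mono_set
    intro x hx
    rcases hx with ⟨hx1, hx2⟩
    constructor
    · exact le_trans (le_min ha.1 hb.1) hx1.le
    · exact le_trans hx2 (max_le ha.2 hb.2)
  have hσmem : σ ∈ Icc (0:ℝ) R := ⟨hσ_pos.le, by linarith⟩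
  have h0mem : (0:ℝ) ∈ Icc (0:ℝ) R := ⟨le_refl _, hR.le⟩
  have h1mem : r₁ ∈ Icc (0:ℝ) R := ⟨by linarith, h1R.le⟩
  have hRmem : R ∈ Icc (0:ℝ) R := ⟨hR.le, le_refl _⟩
  -- the integral over (r₁, R) vanishes
  have hzero : ∫ ρ in r₁..R, f ρ = 0 := by
    rw [intervalIntegral.integral_of_le h1R.le]
    apply integral_eq_zero_of_ae
    have hne : ∀ᵐ ρ : ℝ ∂volume, ρ ≠ R := by
      rw [ae_iff]
      refine measure_mono_null (fun x hx => ?_) (measure_singleton R)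
      simpa using not_not.mp hx
    filter_upwards [ae_restrict_mem measurableSet_Ioc, ae_restrict_of_ae hsupp,
      ae_restrict_of_ae hne] with ρ hρ hsup hneR
    have : u₀ ρ = 0 := hsup ⟨hρ.1, lt_of_le_of_ne hρ.2 hneR⟩
    simp [hf_def, this]
  -- the comparison function
  set g : ℝ → ℝ := fun ρ => r₁ ^ (n - 1) * (A * (r₁ - ρ) ^ p) with hg_def
  have hgcont : Continuous g := by
    apply continuous_const.mul
    apply continuous_const.mul
    exact (continuous_const.sub continuous_id).rpow_const (fun x => Or.inr hp.le)
  have hcomp : ∫ ρ in σ..r₁, f ρ ≤ ∫ ρ in σ..r₁, g ρ := by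
    apply intervalIntegral.integral_mono_ae_restrict hσ1.le (hII σ r₁ hσmem h1mem)
      (hgcont.intervalIntegrable σ r₁)
    have hne : ∀ᵐ ρ : ℝ ∂volume, ρ ≠ r₁ := by
      rw [ae_iff]
      refine measure_mono_null (fun x hx => ?_) (measure_singleton r₁)
      simpa using not_not.mp hx
    filter_upwards [ae_restrict_mem measurableSet_Icc, ae_restrict_of_ae hflat,
      ae_restrict_of_ae hne] with ρ hρ hfl hne1
    have hρIcc : ρ ∈ Icc (0:ℝ) R := ⟨le_trans hσ_pos.le hρ.1, by linarith [hρ.2]⟩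
    have hu_le : u₀ ρ ≤ A * (r₁ - ρ) ^ p :=
      hfl ⟨lt_of_lt_of_le hσ₀ hρ.1, lt_of_le_of_ne hρ.2 hne1⟩
    have hu0 : 0 ≤ u₀ ρ := hnonneg ρ hρIcc
    exact mul_le_mul (pow_le_pow_left₀ hρIcc.1 (hρ.2) _) hu_le hu0
      (pow_nonneg (by linarith : (0:ℝ) ≤ r₁) _)
  -- evaluate the integral of g
  have hval : ∫ ρ in σ..r₁, (r₁ - ρ) ^ p = (r₁ - σ) ^ q / q := by
    rw [intervalIntegral.integral_comp_sub_left (fun t => t ^ p) r₁, sub_self,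
      integral_rpow (Or.inl (by linarith : (-1:ℝ) < p)),
      Real.zero_rpow (by positivity : p + 1 ≠ 0), hqp]
    ring
  have hgval : ∫ ρ in σ..r₁, g ρ = r₁ ^ (n - 1) * A * ((r₁ - σ) ^ q / q) := by
    simp only [hg_def, intervalIntegral.integral_const_mul, hval]
    ring
  -- key algebraic inequality : r₁ - σ ≤ (r₁^n - s)/(n r₀^(n-1))
  have hkey : r₁ - σ ≤ (r₁ ^ n - s) / ((n:ℝ) * r₀ ^ (n - 1)) := by
    rw [le_div_iff₀ (by positivity)]
    have hsum : (n:ℝ) * r₀ ^ (n - 1) ≤ ∑ i ∈ Finset.range n, r₁ ^ i * σ ^ (n - 1 - i) := by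
      calc (n:ℝ) * r₀ ^ (n - 1) = ∑ _i ∈ Finset.range n, r₀ ^ (n - 1) := by
            rw [Finset.sum_const, Finset.card_range, nsmul_eq_mul]
        _ ≤ _ := by
            apply Finset.sum_le_sum
            intro i hi
            have hi' : i < n := Finset.mem_range.mp hi
            have he : r₀ ^ (n - 1) = r₀ ^ i * r₀ ^ (n - 1 - i) := by
              rw [← pow_add]; congr 1; omega
            rw [he]
            exact mul_le_mul (pow_le_pow_left₀ hr₀.le (by linarith) i)
              (pow_le_pow_left₀ hr₀.le hσ₀.le _) (by positivity)
              (pow_nonneg (by linarith : (0:ℝ) ≤ r₁) _)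
    have hfact := geom_sum₂_mul r₁ σ n
    calc (r₁ - σ) * ((n:ℝ) * r₀ ^ (n - 1))
        ≤ (r₁ - σ) * ∑ i ∈ Finset.range n, r₁ ^ i * σ ^ (n - 1 - i) :=
          mul_le_mul_of_nonneg_left hsum (by linarith)
      _ = r₁ ^ n - σ ^ n := by rw [mul_comm]; exact hfact
      _ = r₁ ^ n - s := by rw [hσn]
  have hr1s : (0:ℝ) ≤ r₁ ^ n - s := by linarith [hs.2]
  have hrq : (r₁ - σ) ^ q ≤ (r₁ ^ n - s) ^ q * ((n:ℝ) * r₀ ^ (n - 1)) ^ (-q) := by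
    have h1 : (r₁ - σ) ^ q ≤ ((r₁ ^ n - s) / ((n:ℝ) * r₀ ^ (n - 1))) ^ q :=
      Real.rpow_le_rpow (by linarith) hkey hq.le
    rwa [Real.div_rpow hr1s (by positivity), div_eq_mul_inv,
      ← Real.rpow_neg (by positivity)] at h1
  -- constant identity
  have hconst : (n:ℝ) * (r₁ ^ (n - 1) * A / q * ((n:ℝ) * r₀ ^ (n - 1)) ^ (-q))
      = A * (n : ℝ) ^ (-(1 / (m - 1))) * r₀ ^ (-(((n : ℝ) - 1) * m / (m - 1)))
          * r₁ ^ (n - 1) * (m - 1) / m := by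
    rw [Real.mul_rpow hn'.le (by positivity), ← Real.rpow_natCast r₀ (n-1),
      ← Real.rpow_mul hr₀.le]
    have e1 : ((n - 1 : ℕ) : ℝ) * (-q) = -(((n : ℝ) - 1) * m / (m - 1)) := by
      rw [Nat.cast_sub hn, hq_def]
      push_cast
      field_simp
    rw [e1]
    have e2 : (n:ℝ) * (n:ℝ) ^ (-q) = (n:ℝ) ^ (-(1 / (m - 1))) := by
      nth_rewrite 1 [← Real.rpow_one (n:ℝ)]
      rw [← Real.rpow_add hn']
      congr 1
      rw [hq_def]
      field_simp
      ring
    have hqinv : 1 / q = (m - 1) / m := by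
      rw [hq_def]; field_simp
    calc (n:ℝ) * (r₁ ^ (n - 1) * A / q * ((n:ℝ) ^ (-q) * r₀ ^ (-(((n : ℝ) - 1) * m / (m - 1)))))
        = ((n:ℝ) * (n:ℝ) ^ (-q)) * r₀ ^ (-(((n : ℝ) - 1) * m / (m - 1))) * r₁ ^ (n-1) * A * (1/q) := by
          ring
      _ = _ := by rw [e2, hqinv]; ring
  -- assemble
  have hsplit1 : (∫ ρ in (0:ℝ)..σ, f ρ) + ∫ ρ in σ..R, f ρ = ∫ ρ in (0:ℝ)..R, f ρ :=
    intervalIntegral.integral_add_adjacent_intervals (hII 0 σ h0mem hσmem) (hII σ R hσmem hRmem)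
  have hsplit2 : (∫ ρ in σ..r₁, f ρ) + ∫ ρ in r₁..R, f ρ = ∫ ρ in σ..R, f ρ :=
    intervalIntegral.integral_add_adjacent_intervals (hII σ r₁ hσmem h1mem) (hII r₁ R h1mem hRmem)
  have hmain : (n:ℝ) * ∫ ρ in σ..r₁, f ρ
      ≤ A * (n : ℝ) ^ (-(1 / (m - 1))) * r₀ ^ (-(((n : ℝ) - 1) * m / (m - 1)))
          * r₁ ^ (n - 1) * (m - 1) / m * (r₁ ^ n - s) ^ q := by
    calc (n:ℝ) * ∫ ρ in σ..r₁, f ρ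
        ≤ (n:ℝ) * ∫ ρ in σ..r₁, g ρ := by
          apply mul_le_mul_of_nonneg_left hcomp hn'.le
      _ = (n:ℝ) * (r₁ ^ (n - 1) * A * ((r₁ - σ) ^ q / q)) := by rw [hgval]
      _ ≤ (n:ℝ) * (r₁ ^ (n - 1) * A / q * ((n:ℝ) * r₀ ^ (n - 1)) ^ (-q))
            * (r₁ ^ n - s) ^ q := by
          have h1 : (n:ℝ) * (r₁ ^ (n - 1) * A * ((r₁ - σ) ^ q / q))
              = ((n:ℝ) * (r₁ ^ (n-1) * A / q)) * (r₁ - σ) ^ q := by ring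
          have h2 : (n:ℝ) * (r₁ ^ (n - 1) * A / q * ((n:ℝ) * r₀ ^ (n - 1)) ^ (-q))
                * (r₁ ^ n - s) ^ q
              = ((n:ℝ) * (r₁ ^ (n-1) * A / q))
                * ((r₁ ^ n - s) ^ q * ((n:ℝ) * r₀ ^ (n - 1)) ^ (-q)) := by ring
          rw [h1, h2]
          exact mul_le_mul_of_nonneg_left hrq
            (mul_nonneg hn'.le (div_nonneg (mul_nonneg
              (pow_nonneg (by linarith : (0:ℝ) ≤ r₁) _) hA.le) hq.le))
      _ = _ := by rw [hconst]
  rw [massAccum]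
  have hfin : (n:ℝ) * ∫ ρ in (0:ℝ)..R, f ρ
      = (n:ℝ) * (∫ ρ in (0:ℝ)..σ, f ρ) + (n:ℝ) * ∫ ρ in σ..r₁, f ρ := by
    rw [← hsplit1, ← hsplit2, hzero, add_zero, mul_add]
  show (n : ℝ) * (∫ ρ in (0:ℝ)..R, f ρ)
      - A * (n : ℝ) ^ (-(1 / (m - 1))) * r₀ ^ (-(((n : ℝ) - 1) * m / (m - 1)))
        * r₁ ^ (n - 1) * (m - 1) / m * (r₁ ^ n - s) ^ (m / (m - 1))
    ≤ (n : ℝ) * ∫ ρ in (0:ℝ)..σ, f ρ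
  rw [hfin]
  have : (r₁ ^ n - s) ^ (m / (m-1)) = (r₁ ^ n - s) ^ q := by rw [hq_def]
  rw [this]
  linarith [hmain]
end

section
/- Let n ≥ 1 be an integer, m > 1, 0 < r₀ < r₁ < R and A > 0. Let u₀ : [0,R] → ℝ be bounded, measurable and nonnegative with u₀(ρ) = 0 for a.e. ρ ∈ (r₁, R), and suppose u₀(ρ) ≥ A(r₁ − ρ)^{1/(m−1)} for a.e. ρ ∈ (r₀, r₁). Let w₀ be the mass accumulation function of u₀ and set M := n∫₀^R ρ^{n−1}u₀(ρ)dρ. Then for all s ∈ (r₀ⁿ, r₁ⁿ): w₀(s) ≤ M − (A·n^{−1/(m−1)}·r₁^{−(n−1)m/(m−1)}·r₀^{n−1}·(m−1)/m)·(r₁ⁿ − s)^{m/(m−1)}. -/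
open Set MeasureTheory Filter

/-- **Lemma 3.1, second part**: if `u₀(ρ) ≥ A(r₁ − ρ)^{1/(m−1)}` a.e. on `(r₀, r₁)` and `u₀`
vanishes a.e. on `(r₁, R)`, then the mass accumulation function satisfies the upper bound
`w₀(s) ≤ M − (A n^{−1/(m−1)} r₁^{−(n−1)m/(m−1)} r₀^{n−1} (m−1)/m)(r₁ⁿ − s)^{m/(m−1)}`. -/
theorem massAccum_upper_bound
    (n : ℕ) (hn : 1 ≤ n) (m : ℝ) (hm : 1 < m) (r₀ r₁ R A : ℝ)
    (hr₀ : 0 < r₀) (h01 : r₀ < r₁) (h1R : r₁ < R) (hA : 0 < A)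
    (u₀ : ℝ → ℝ) (hmeas : Measurable u₀)
    (hbdd : ∃ M, ∀ ρ ∈ Icc (0:ℝ) R, u₀ ρ ≤ M)
    (hnonneg : ∀ ρ ∈ Icc (0:ℝ) R, 0 ≤ u₀ ρ)
    (hsupp : ∀ᵐ ρ ∂volume, ρ ∈ Ioo r₁ R → u₀ ρ = 0)
    (hsteep : ∀ᵐ ρ ∂volume, ρ ∈ Ioo r₀ r₁ → A * (r₁ - ρ) ^ (1 / (m - 1)) ≤ u₀ ρ) :
    ∀ s ∈ Ioo (r₀ ^ n) (r₁ ^ n),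
      massAccum n u₀ s
        ≤ (n : ℝ) * (∫ ρ in (0:ℝ)..R, ρ ^ (n - 1) * u₀ ρ)
          - A * (n : ℝ) ^ (-(1 / (m - 1))) * r₁ ^ (-(((n : ℝ) - 1) * m / (m - 1)))
            * r₀ ^ (n - 1) * (m - 1) / m * (r₁ ^ n - s) ^ (m / (m - 1)) := by
  obtain ⟨M₀, hM₀⟩ := hbdd
  have hm1 : (0:ℝ) < m - 1 := by linarith
  set q : ℝ := 1 / (m - 1) with hq
  have hq0 : 0 < q := by positivity
  have hq1 : q + 1 = m / (m - 1) := by rw [hq]; field_simp; ring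
  have hnR : (1:ℝ) ≤ (n:ℝ) := by exact_mod_cast hn
  have hnpos : (0:ℝ) < n := by linarith
  have hr₁ : 0 < r₁ := hr₀.trans h01
  have hRpos : 0 < R := hr₁.trans h1R
  have hM₀0 : 0 ≤ M₀ :=
    le_trans (hnonneg 0 ⟨le_refl 0, hRpos.le⟩) (hM₀ 0 ⟨le_refl 0, hRpos.le⟩)
  set f : ℝ → ℝ := fun ρ => ρ ^ (n-1) * u₀ ρ with hf
  have hfmeas : Measurable f := (measurable_id.pow_const _).mul hmeas
  have hint : ∀ a b : ℝ, a ∈ Icc (0:ℝ) R → b ∈ Icc (0:ℝ) R →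
      IntervalIntegrable f volume a b := by
    intro a b ha hb
    rw [intervalIntegrable_iff]
    apply Measure.integrableOn_of_bounded (M := R ^ (n-1) * M₀)
    · exact measure_Ioc_lt_top.ne
    · exact hfmeas.aestronglyMeasurable
    · rw [ae_restrict_iff' measurableSet_uIoc]
      apply Filter.Eventually.of_forall
      intro x hx
      have hx' : x ∈ Icc (0:ℝ) R := by
        rcases hx with ⟨h1, h2⟩
        constructor
        · rcases le_total a b with h | h
          · simp only [min_def] at h1; split_ifs at h1 <;> nlinarith [ha.1, hb.1]
          · simp only [min_def] at h1; split_ifs at h1 <;> nlinarith [ha.1, hb.1]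
        · rcases le_total a b with h | h
          · simp only [max_def] at h2; split_ifs at h2 <;> nlinarith [ha.2, hb.2]
          · simp only [max_def] at h2; split_ifs at h2 <;> nlinarith [ha.2, hb.2]
      have h0x : 0 ≤ x := hx'.1
      have hxR : x ≤ R := hx'.2
      have hu0 : 0 ≤ u₀ x := hnonneg x hx'
      have huM : u₀ x ≤ M₀ := hM₀ x hx'
      have : ‖f x‖ = x ^ (n-1) * u₀ x := by
        simp only [hf, Real.norm_eq_abs, abs_of_nonneg (by positivity : (0:ℝ) ≤ x ^ (n-1) * u₀ x)]
      rw [this]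
      exact mul_le_mul (pow_le_pow_left₀ h0x hxR _) huM hu0 (by positivity)
  intro s hs
  obtain ⟨hs1, hs2⟩ := hs
  have hs0 : 0 < s := lt_trans (pow_pos hr₀ n) hs1
  set σ : ℝ := s ^ ((n:ℝ)⁻¹) with hσ
  have hσ0 : 0 < σ := Real.rpow_pos_of_pos hs0 _
  have hσpow : σ ^ n = s := by
    rw [hσ, ← Real.rpow_natCast (s ^ ((n:ℝ)⁻¹)) n, ← Real.rpow_mul hs0.le,
      inv_mul_cancel₀ (by positivity : (n:ℝ) ≠ 0), Real.rpow_one]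
  have hσr₀ : r₀ < σ := by
    have h := hs1; rw [← hσpow] at h
    exact lt_of_pow_lt_pow_left₀ n hσ0.le h
  have hσr₁ : σ < r₁ := by
    have h := hs2; rw [← hσpow] at h
    exact lt_of_pow_lt_pow_left₀ n hr₁.le h
  have hσmem : σ ∈ Icc (0:ℝ) R := ⟨hσ0.le, (hσr₁.trans h1R).le⟩
  have h0mem : (0:ℝ) ∈ Icc (0:ℝ) R := ⟨le_refl 0, hRpos.le⟩
  have hr₁mem : r₁ ∈ Icc (0:ℝ) R := ⟨hr₁.le, h1R.le⟩
  have hRmem : R ∈ Icc (0:ℝ) R := ⟨hRpos.le, le_refl R⟩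
  -- a.e. points avoid r₁ and R
  have hner₁ : ∀ᵐ x : ℝ ∂volume, x ≠ r₁ := by
    rw [ae_iff]; simpa using volume_singleton (a := r₁)
  have hneR : ∀ᵐ x : ℝ ∂volume, x ≠ R := by
    rw [ae_iff]; simpa using volume_singleton (a := R)
  -- the integral over (r₁, R) vanishes
  have hIr₁R : ∫ ρ in r₁..R, f ρ = 0 := by
    rw [intervalIntegral.integral_congr_ae (g := fun _ => (0:ℝ)),
      intervalIntegral.integral_const, smul_zero]
    filter_upwards [hsupp, hneR] with x hx hxR hmem
    rw [uIoc_of_le h1R.le] at hmem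
    have : x ∈ Ioo r₁ R := ⟨hmem.1, lt_of_le_of_ne hmem.2 hxR⟩
    simp [hf, hx this]
  -- splitting the integral
  have hsplit : ∫ ρ in (0:ℝ)..R, f ρ = (∫ ρ in (0:ℝ)..σ, f ρ) + ∫ ρ in σ..r₁, f ρ := by
    rw [← intervalIntegral.integral_add_adjacent_intervals (hint 0 r₁ h0mem hr₁mem)
        (hint r₁ R hr₁mem hRmem), hIr₁R, add_zero,
      ← intervalIntegral.integral_add_adjacent_intervals (hint 0 σ h0mem hσmem)
        (hint σ r₁ hσmem hr₁mem)]
  -- the comparison function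
  set g : ℝ → ℝ := fun ρ => (A * r₀ ^ (n-1)) * (r₁ - ρ) ^ q with hg
  have hgint : IntervalIntegrable g volume σ r₁ := by
    apply IntervalIntegrable.const_mul
    have h := (intervalIntegral.intervalIntegrable_rpow' (a := (0:ℝ)) (b := r₁ - σ)
      (r := q) (by linarith)).comp_sub_left r₁
    simpa using h.symm
  have hmono : ∫ ρ in σ..r₁, g ρ ≤ ∫ ρ in σ..r₁, f ρ := by
    apply intervalIntegral.integral_mono_ae_restrict hσr₁.le hgint (hint σ r₁ hσmem hr₁mem)
    rw [Filter.EventuallyLE, ae_restrict_iff' measurableSet_Icc]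
    filter_upwards [hsteep, hner₁] with x hx hxr₁ hmem
    have hxIoo : x ∈ Ioo r₀ r₁ := ⟨lt_of_lt_of_le hσr₀ hmem.1, lt_of_le_of_ne hmem.2 hxr₁⟩
    have h1 : r₀ ^ (n-1) ≤ x ^ (n-1) := pow_le_pow_left₀ hr₀.le (le_of_lt hxIoo.1) _
    have h2 : A * (r₁ - x) ^ q ≤ u₀ x := hx hxIoo
    have h3 : 0 ≤ (r₁ - x) ^ q := Real.rpow_nonneg (by linarith [hxIoo.2]) _
    calc g x = r₀ ^ (n-1) * (A * (r₁ - x) ^ q) := by ring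
      _ ≤ x ^ (n-1) * u₀ x := mul_le_mul h1 h2 (mul_nonneg hA.le h3) (pow_nonneg (by linarith [hxIoo.1]) _)
  -- evaluating the comparison integral
  have hgval : ∫ ρ in σ..r₁, g ρ = (A * r₀ ^ (n-1)) * ((r₁ - σ) ^ (q+1) / (q+1)) := by
    rw [hg]
    rw [intervalIntegral.integral_const_mul]
    congr 1
    have h := intervalIntegral.integral_comp_sub_left (a := σ) (b := r₁)
      (fun t => t ^ q) r₁
    rw [h, sub_self, integral_rpow (Or.inl (by linarith)),
      Real.zero_rpow (ne_of_gt (by linarith)), sub_zero]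
  -- key elementary inequality: r₁^n - σ^n ≤ n r₁^{n-1} (r₁ - σ)
  have hkey : r₁ ^ n - σ ^ n ≤ (n:ℝ) * r₁ ^ (n-1) * (r₁ - σ) := by
    rw [← geom_sum₂_mul r₁ σ n]
    apply mul_le_mul_of_nonneg_right _ (by linarith)
    calc (∑ i ∈ Finset.range n, r₁ ^ i * σ ^ (n - 1 - i))
        ≤ ∑ _i ∈ Finset.range n, r₁ ^ (n-1) := by
          apply Finset.sum_le_sum
          intro i hi
          rw [Finset.mem_range] at hi
          have hi' : i + (n - 1 - i) = n - 1 := by omega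
          calc r₁ ^ i * σ ^ (n-1-i) ≤ r₁ ^ i * r₁ ^ (n-1-i) :=
                mul_le_mul_of_nonneg_left (pow_le_pow_left₀ hσ0.le hσr₁.le _) (by positivity)
            _ = r₁ ^ (n-1) := by rw [← pow_add, hi']
      _ = (n:ℝ) * r₁ ^ (n-1) := by
          rw [Finset.sum_const, Finset.card_range, nsmul_eq_mul]
  have hσn_le : σ ^ n ≤ r₁ ^ n := pow_le_pow_left₀ hσ0.le hσr₁.le n
  -- casting the natural power of r₁ to an rpow
  have hcast : ((n - 1 : ℕ) : ℝ) = (n:ℝ) - 1 := by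
    have h := Nat.cast_sub (R := ℝ) hn; simpa using h
  have hr₁pow : (r₁ ^ (n-1) : ℝ) = r₁ ^ ((n:ℝ) - 1) := by
    rw [← Real.rpow_natCast r₁ (n-1), hcast]
  -- the power comparison
  have hpow : (r₁ ^ n - s) ^ (q+1)
      ≤ (n:ℝ) ^ (q+1) * r₁ ^ (((n:ℝ) - 1) * (q+1)) * (r₁ - σ) ^ (q+1) := by
    rw [← hσpow]
    calc (r₁ ^ n - σ ^ n) ^ (q+1)
        ≤ ((n:ℝ) * r₁ ^ (n-1) * (r₁ - σ)) ^ (q+1) :=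
          Real.rpow_le_rpow (by linarith) hkey (by positivity)
      _ = (n:ℝ) ^ (q+1) * r₁ ^ (((n:ℝ) - 1) * (q+1)) * (r₁ - σ) ^ (q+1) := by
          rw [Real.mul_rpow (by positivity) (by linarith),
            Real.mul_rpow (by positivity) (by positivity), hr₁pow,
            ← Real.rpow_mul hr₁.le]
  -- putting everything together
  have hexp1 : (n:ℝ) ^ (-q) * (n:ℝ) ^ (q+1) = (n:ℝ) := by
    rw [← Real.rpow_add hnpos]; norm_num
  have hexp2 : r₁ ^ (-(((n:ℝ) - 1) * m / (m - 1))) * r₁ ^ (((n:ℝ) - 1) * (q+1)) = 1 := by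
    rw [← Real.rpow_add hr₁]
    have h : -(((n:ℝ) - 1) * m / (m - 1)) + ((n:ℝ) - 1) * (q+1) = 0 := by
      rw [hq1]; ring
    rw [h, Real.rpow_zero]
  have hC0 : 0 ≤ A * (n:ℝ) ^ (-q) * r₁ ^ (-(((n:ℝ) - 1) * m / (m - 1)))
      * r₀ ^ (n - 1) * (m - 1) / m := by positivity
  have hfinal :
      A * (n:ℝ) ^ (-q) * r₁ ^ (-(((n:ℝ) - 1) * m / (m - 1)))
        * r₀ ^ (n - 1) * (m - 1) / m * (r₁ ^ n - s) ^ (q+1)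
      ≤ (n:ℝ) * ∫ ρ in σ..r₁, f ρ := by
    calc A * (n:ℝ) ^ (-q) * r₁ ^ (-(((n:ℝ) - 1) * m / (m - 1)))
          * r₀ ^ (n - 1) * (m - 1) / m * (r₁ ^ n - s) ^ (q+1)
        ≤ A * (n:ℝ) ^ (-q) * r₁ ^ (-(((n:ℝ) - 1) * m / (m - 1)))
          * r₀ ^ (n - 1) * (m - 1) / m
          * ((n:ℝ) ^ (q+1) * r₁ ^ (((n:ℝ) - 1) * (q+1)) * (r₁ - σ) ^ (q+1)) :=
          mul_le_mul_of_nonneg_left hpow hC0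
      _ = (n:ℝ) * ((A * r₀ ^ (n-1)) * ((r₁ - σ) ^ (q+1) / (q+1))) := by
          have hm0 : m ≠ 0 := by linarith
          have hq10 : q + 1 ≠ 0 := by positivity
          have h1 : (m - 1) / m = 1 / (q + 1) := by
            rw [hq1]; field_simp
          calc A * (n:ℝ) ^ (-q) * r₁ ^ (-(((n:ℝ) - 1) * m / (m - 1)))
                * r₀ ^ (n - 1) * (m - 1) / m
                * ((n:ℝ) ^ (q+1) * r₁ ^ (((n:ℝ) - 1) * (q+1)) * (r₁ - σ) ^ (q+1))
              = ((n:ℝ) ^ (-q) * (n:ℝ) ^ (q+1))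
                * (r₁ ^ (-(((n:ℝ) - 1) * m / (m - 1))) * r₁ ^ (((n:ℝ) - 1) * (q+1)))
                * (A * r₀ ^ (n-1) * ((m-1)/m) * (r₁ - σ) ^ (q+1)) := by ring
            _ = (n:ℝ) * ((A * r₀ ^ (n-1)) * ((r₁ - σ) ^ (q+1) / (q+1))) := by
                rw [hexp1, hexp2, h1]; ring
      _ ≤ (n:ℝ) * ∫ ρ in σ..r₁, f ρ := by
          rw [← hgval]
          exact mul_le_mul_of_nonneg_left hmono (by positivity)
  -- conclude
  have hgoal_exp : m / (m - 1) = q + 1 := hq1.symm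
  rw [massAccum, ← hσ, hsplit, hgoal_exp]
  have : (n:ℝ) * ((∫ ρ in (0:ℝ)..σ, f ρ) + ∫ ρ in σ..r₁, f ρ)
      = (n:ℝ) * (∫ ρ in (0:ℝ)..σ, f ρ) + (n:ℝ) * ∫ ρ in σ..r₁, f ρ := by ring
  rw [this]
  linarith [hfinal]
end

section
/- Interior subsolution estimate: let n ≥ 1 be an integer, m > 1, μ > 0, R > 0, 0 < r₀ < r₁ < r₂ ≤ R, λ ∈ (0,1), κ > 0, θ_max > 0, ε₀ ∈ (0,1), C > 0, η ≥ 0, ε ∈ (0,ε₀], θ ∈ [0,θ_max], and set δ := (εκ(m−1)/(Cm))^{m−1} and ρ(t) := r₁ⁿ − θt. Assume: (i) C ≤ ((m−1)κ/(m(κ+1)))·((1−λ)μ(Rⁿ−r₁ⁿ)(m−1)/(r₁^{2n−2}n²))^{1/(m−1)}; (ii) C(r₁ⁿ−r₀ⁿ)^{m/(m−1)} ≤ (λμ/2)(Rⁿ−r₁ⁿ) − θ_max − ε₀κ(Rⁿ−r₁ⁿ); (iii) η ≤ (λμ/2)(Rⁿ−r₁ⁿ). Define u̲_mid(s,t) :=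 μRⁿ − η − C(ρ(t) − s)^{m/(m−1)}. Then for all t ≥ 0 and all s ∈ [r₀ⁿ, ρ(t) − δ) one has (P_ε u̲_mid)(s,t) ≤ −εκ(Rⁿ − r₂ⁿ)·∂_s u̲_mid(s,t) ≤ 0, where all derivatives are the classical ones, namely ∂_s u̲_mid(s,t) = (Cm/(m−1))(ρ(t)−s)^{1/(m−1)}, ∂_{ss} u̲_mid(s,t) = −(Cm/(m−1)²)(ρ(t)−s)^{1/(m−1)−1} and ∂_t u̲_mid(s,t) = θ·∂_s u̲_mid(s,t). -/
open Set

set_option maxHeartbeats 1600000 in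
/-- **Interior subsolution estimate** (core computation in Lemma 4.2): under conditions
(i)–(iii), the inner piece `u̲_mid(s,t) = μRⁿ − η − C(ρ(t) − s)^{m/(m−1)}` with
`ρ(t) = r₁ⁿ − θt` satisfies `(P_ε u̲_mid)(s,t) ≤ −εκ(Rⁿ − r₂ⁿ)∂_s u̲_mid ≤ 0` on
`[r₀ⁿ, ρ(t) − δ)` for all `t ≥ 0`, where the classical derivatives
`∂_s u̲_mid = (Cm/(m−1))(ρ−s)^{1/(m−1)}`, `∂_{ss} u̲_mid = −(Cm/(m−1)²)(ρ−s)^{1/(m−1)−1}`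
and `∂_t u̲_mid = θ ∂_s u̲_mid` are substituted into `P_ε`. -/
theorem interior_subsolution_estimate
    (n : ℕ) (hn : 1 ≤ n) (m μ R : ℝ) (hm : 1 < m) (hμ : 0 < μ) (hR : 0 < R)
    (r₀ r₁ r₂ lam κ θmax ε₀ C η ε θ : ℝ)
    (hr₀ : 0 < r₀) (h01 : r₀ < r₁) (h12 : r₁ < r₂) (h2R : r₂ ≤ R)
    (hlam : lam ∈ Ioo (0:ℝ) 1) (hκ : 0 < κ) (hθmax : 0 < θmax)
    (hε₀ : ε₀ ∈ Ioo (0:ℝ) 1) (hC : 0 < C) (hη : 0 ≤ η)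
    (hε : ε ∈ Ioc (0:ℝ) ε₀) (hθ : θ ∈ Icc (0:ℝ) θmax)
    (hi : C ≤ (m - 1) * κ / (m * (κ + 1))
      * ((1 - lam) * μ * (R ^ n - r₁ ^ n) * (m - 1) / (r₁ ^ (2 * n - 2) * (n : ℝ) ^ 2))
          ^ (1 / (m - 1)))
    (hii : C * (r₁ ^ n - r₀ ^ n) ^ (m / (m - 1))
      ≤ lam * μ / 2 * (R ^ n - r₁ ^ n) - θmax - ε₀ * κ * (R ^ n - r₁ ^ n))
    (hiii : η ≤ lam * μ / 2 * (R ^ n - r₁ ^ n)) :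
    ∀ t ∈ Ici (0:ℝ),
      ∀ s ∈ Ico (r₀ ^ n) (r₁ ^ n - θ * t - (ε * κ * (m - 1) / (C * m)) ^ (m - 1)),
        (θ * (C * m / (m - 1) * (r₁ ^ n - θ * t - s) ^ (1 / (m - 1)))
            - (n : ℝ) ^ 2 * s ^ ((2 : ℝ) - 2 / (n : ℝ))
              * (C * m / (m - 1) * (r₁ ^ n - θ * t - s) ^ (1 / (m - 1)) + ε) ^ (m - 1)
              * (-(C * m / (m - 1) ^ 2) * (r₁ ^ n - θ * t - s) ^ (1 / (m - 1) - 1))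
            - (μ * R ^ n - η - C * (r₁ ^ n - θ * t - s) ^ (m / (m - 1)))
              * (C * m / (m - 1) * (r₁ ^ n - θ * t - s) ^ (1 / (m - 1)))
            + μ * s * (C * m / (m - 1) * (r₁ ^ n - θ * t - s) ^ (1 / (m - 1))))
          ≤ -(ε * κ * (R ^ n - r₂ ^ n))
              * (C * m / (m - 1) * (r₁ ^ n - θ * t - s) ^ (1 / (m - 1))) ∧
        -(ε * κ * (R ^ n - r₂ ^ n))
              * (C * m / (m - 1) * (r₁ ^ n - θ * t - s) ^ (1 / (m - 1))) ≤ 0 := by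
  intro t ht s hs
  obtain ⟨hs0, hs1⟩ := hs
  obtain ⟨hlam0, hlam1⟩ := hlam
  obtain ⟨hε₀0, hε₀1⟩ := hε₀
  obtain ⟨hε0, hεε₀⟩ := hε
  obtain ⟨hθ0, hθm⟩ := hθ
  have hm1 : (0:ℝ) < m - 1 := by linarith
  have hm0 : (0:ℝ) < m := by linarith
  have hn0 : (0:ℝ) < (n:ℝ) := by exact_mod_cast Nat.lt_of_lt_of_le Nat.zero_lt_one hn
  have hr₁ : 0 < r₁ := lt_trans hr₀ h01
  have hr₂ : 0 < r₂ := lt_trans hr₁ h12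
  have hRr₁ : r₁ < R := lt_of_lt_of_le h12 h2R
  have ht0 : (0:ℝ) ≤ t := ht
  have hX : 0 < R ^ n - r₁ ^ n := by
    have := pow_lt_pow_left₀ hRr₁ hr₁.le (by omega : n ≠ 0)
    linarith
  have hX2 : R ^ n - r₂ ^ n ≤ R ^ n - r₁ ^ n := by
    have := pow_le_pow_left₀ hr₁.le h12.le n
    linarith
  have hX2' : (0:ℝ) ≤ R ^ n - r₂ ^ n := by
    have := pow_le_pow_left₀ hr₂.le h2R n
    linarith
  have hδbase : 0 < ε * κ * (m - 1) / (C * m) := by positivity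
  have hδ : 0 < (ε * κ * (m - 1) / (C * m)) ^ (m - 1) := Real.rpow_pos_of_pos hδbase _
  set y := r₁ ^ n - θ * t - s with hy_def
  have hyδ : (ε * κ * (m - 1) / (C * m)) ^ (m - 1) < y := by
    rw [hy_def]; linarith
  have hy : 0 < y := lt_trans hδ hyδ
  have hP : 0 < y ^ (1 / (m - 1)) := Real.rpow_pos_of_pos hy _
  have hD : 0 < C * m / (m - 1) := by positivity
  set ws := C * m / (m - 1) * y ^ (1 / (m - 1)) with hws_def
  have hws : 0 < ws := mul_pos hD hP
  -- ε κ < ws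
  have hb : ((ε * κ * (m - 1) / (C * m)) ^ (m - 1)) ^ (1 / (m - 1))
      = ε * κ * (m - 1) / (C * m) := by
    rw [← Real.rpow_mul hδbase.le, mul_one_div, div_self hm1.ne', Real.rpow_one]
  have hεws : ε * κ < ws := by
    have h1 : ((ε * κ * (m - 1) / (C * m)) ^ (m - 1)) ^ (1 / (m - 1)) < y ^ (1 / (m - 1)) :=
      Real.rpow_lt_rpow hδ.le hyδ (by positivity)
    rw [hb] at h1
    have h2 := mul_lt_mul_of_pos_left h1 hD
    calc ε * κ = C * m / (m - 1) * (ε * κ * (m - 1) / (C * m)) := by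
          field_simp
    _ < ws := h2
  have hwse : ws + ε ≤ (κ + 1) / κ * ws := by
    have h1 : ε ≤ ws / κ := by
      rw [le_div_iff₀ hκ]; linarith [hεws]
    have h2 : (κ + 1) / κ * ws = ws + ws / κ := by field_simp
    linarith
  -- power bound on (ws + ε)^(m-1)
  have hpow1 : (ws + ε) ^ (m - 1) ≤ ((κ + 1) / κ * (C * m / (m - 1))) ^ (m - 1) * y := by
    calc (ws + ε) ^ (m - 1) ≤ ((κ + 1) / κ * ws) ^ (m - 1) :=
          Real.rpow_le_rpow (by positivity) hwse hm1.le
    _ = ((κ + 1) / κ * (C * m / (m - 1))) ^ (m - 1) * (y ^ (1 / (m - 1))) ^ (m - 1) := by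
          rw [hws_def, ← mul_assoc, Real.mul_rpow (by positivity) hP.le]
    _ = ((κ + 1) / κ * (C * m / (m - 1))) ^ (m - 1) * y := by
          rw [← Real.rpow_mul hy.le, one_div, inv_mul_cancel₀ hm1.ne', Real.rpow_one]
  -- condition (i)
  set A := (1 - lam) * μ * (R ^ n - r₁ ^ n) * (m - 1) / (r₁ ^ (2 * n - 2) * (n : ℝ) ^ 2)
    with hA_def
  have hA : 0 < A := by
    rw [hA_def]
    apply div_pos
    · have := mul_pos (mul_pos (mul_pos (by linarith : (0:ℝ) < 1 - lam) hμ) hX) hm1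
      linarith
    · positivity
  have hiA : ((κ + 1) / κ * (C * m / (m - 1))) ^ (m - 1) ≤ A := by
    have h2 : 0 < (m - 1) * κ / (m * (κ + 1)) := by positivity
    have h3 : (κ + 1) / κ * (C * m / (m - 1)) = C / ((m - 1) * κ / (m * (κ + 1))) := by
      field_simp
    have h1 : (κ + 1) / κ * (C * m / (m - 1)) ≤ A ^ (1 / (m - 1)) := by
      rw [h3, div_le_iff₀ h2, mul_comm]
      exact hi
    calc ((κ + 1) / κ * (C * m / (m - 1))) ^ (m - 1) ≤ (A ^ (1 / (m - 1))) ^ (m - 1) :=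
          Real.rpow_le_rpow (by positivity) h1 hm1.le
    _ = A := by
          rw [← Real.rpow_mul hA.le, one_div, inv_mul_cancel₀ hm1.ne', Real.rpow_one]
  -- bounds on s and y
  have hspos : 0 < s := lt_of_lt_of_le (pow_pos hr₀ n) hs0
  have hsr₁ : s < r₁ ^ n := by
    have hθt : 0 ≤ θ * t := mul_nonneg hθ0 ht0
    linarith
  have hepos : (0:ℝ) ≤ 2 - 2 / (n:ℝ) := by
    have h1 : (1:ℝ) ≤ (n:ℝ) := by exact_mod_cast hn
    have h2 : 2 / (n:ℝ) ≤ 2 := by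
      rw [div_le_iff₀ hn0]; linarith
    linarith
  have hse : s ^ ((2:ℝ) - 2 / (n:ℝ)) ≤ r₁ ^ (2 * n - 2) := by
    have hcast : ((2 * n - 2 : ℕ) : ℝ) = 2 * (n:ℝ) - 2 := by
      have h2 : 2 ≤ 2 * n := by omega
      push_cast [Nat.cast_sub h2]
      ring
    calc s ^ ((2:ℝ) - 2 / (n:ℝ)) ≤ (r₁ ^ n) ^ ((2:ℝ) - 2 / (n:ℝ)) :=
          Real.rpow_le_rpow hspos.le hsr₁.le hepos
    _ = r₁ ^ (((2 * n - 2 : ℕ)) : ℝ) := by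
          rw [← Real.rpow_natCast r₁ n, ← Real.rpow_mul hr₁.le]
          congr 1
          rw [hcast]
          field_simp
    _ = r₁ ^ (2 * n - 2) := Real.rpow_natCast r₁ (2 * n - 2)
  have hybound : y ≤ r₁ ^ n - r₀ ^ n := by
    have hθt : 0 ≤ θ * t := mul_nonneg hθ0 ht0
    rw [hy_def]; linarith
  have hC1 : C * y ^ (m / (m - 1)) ≤ C * (r₁ ^ n - r₀ ^ n) ^ (m / (m - 1)) :=
    mul_le_mul_of_nonneg_left
      (Real.rpow_le_rpow hy.le hybound (by positivity)) hC.le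
  -- diffusion term bound
  have hT : (n:ℝ) ^ 2 * s ^ ((2:ℝ) - 2 / (n:ℝ)) * (ws + ε) ^ (m - 1)
        * (C * m / (m - 1) ^ 2 * y ^ (1 / (m - 1) - 1))
      ≤ (1 - lam) * μ * (R ^ n - r₁ ^ n) * ws := by
    have hyrw : y ^ (1 / (m - 1) - 1) = y ^ (1 / (m - 1)) / y := by
      rw [Real.rpow_sub hy, Real.rpow_one]
    have h2 : (ws + ε) ^ (m - 1) ≤ A * y :=
      hpow1.trans (mul_le_mul_of_nonneg_right hiA hy.le)
    have h1 : (n:ℝ) ^ 2 * s ^ ((2:ℝ) - 2 / (n:ℝ)) * (ws + ε) ^ (m - 1)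
        ≤ (n:ℝ) ^ 2 * (r₁ ^ (2 * n - 2) * (A * y)) := by
      have h4 := mul_le_mul hse h2 (by positivity) (by positivity)
      calc (n:ℝ) ^ 2 * s ^ ((2:ℝ) - 2 / (n:ℝ)) * (ws + ε) ^ (m - 1)
          = (n:ℝ) ^ 2 * (s ^ ((2:ℝ) - 2 / (n:ℝ)) * (ws + ε) ^ (m - 1)) := by ring
      _ ≤ (n:ℝ) ^ 2 * (r₁ ^ (2 * n - 2) * (A * y)) :=
          mul_le_mul_of_nonneg_left h4 (by positivity)
    have hc : (0:ℝ) ≤ C * m / (m - 1) ^ 2 * (y ^ (1 / (m - 1)) / y) := by positivity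
    rw [hyrw]
    calc (n:ℝ) ^ 2 * s ^ ((2:ℝ) - 2 / (n:ℝ)) * (ws + ε) ^ (m - 1)
          * (C * m / (m - 1) ^ 2 * (y ^ (1 / (m - 1)) / y))
        ≤ (n:ℝ) ^ 2 * (r₁ ^ (2 * n - 2) * (A * y))
          * (C * m / (m - 1) ^ 2 * (y ^ (1 / (m - 1)) / y)) :=
          mul_le_mul_of_nonneg_right h1 hc
    _ = (1 - lam) * μ * (R ^ n - r₁ ^ n) * ws := by
          rw [hA_def, hws_def]
          field_simp
  -- scalar bound
  have hK : θ - μ * R ^ n + η + C * y ^ (m / (m - 1)) + μ * s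
        + (1 - lam) * μ * (R ^ n - r₁ ^ n)
      ≤ -(ε * κ * (R ^ n - r₂ ^ n)) := by
    have hμs : μ * s ≤ μ * r₁ ^ n := mul_le_mul_of_nonneg_left hsr₁.le hμ.le
    have hεκ1 : ε * κ * (R ^ n - r₂ ^ n) ≤ ε * κ * (R ^ n - r₁ ^ n) :=
      mul_le_mul_of_nonneg_left hX2 (by positivity)
    have hεκ2 : ε * κ * (R ^ n - r₁ ^ n) ≤ ε₀ * κ * (R ^ n - r₁ ^ n) :=
      mul_le_mul_of_nonneg_right (mul_le_mul_of_nonneg_right hεε₀ hκ.le) hX.le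
    have hring : (1 - lam) * μ * (R ^ n - r₁ ^ n)
        = μ * R ^ n - μ * r₁ ^ n - lam * μ / 2 * (R ^ n - r₁ ^ n)
          - lam * μ / 2 * (R ^ n - r₁ ^ n) := by ring
    linarith
  have hmain : (θ - μ * R ^ n + η + C * y ^ (m / (m - 1)) + μ * s
        + (1 - lam) * μ * (R ^ n - r₁ ^ n)) * ws
      ≤ -(ε * κ * (R ^ n - r₂ ^ n)) * ws :=
    mul_le_mul_of_nonneg_right hK hws.le
  constructor
  · calc θ * ws
        - (n:ℝ) ^ 2 * s ^ ((2:ℝ) - 2 / (n:ℝ)) * (ws + ε) ^ (m - 1)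
          * (-(C * m / (m - 1) ^ 2) * y ^ (1 / (m - 1) - 1))
        - (μ * R ^ n - η - C * y ^ (m / (m - 1))) * ws + μ * s * ws
        = (θ - μ * R ^ n + η + C * y ^ (m / (m - 1)) + μ * s) * ws
          + (n:ℝ) ^ 2 * s ^ ((2:ℝ) - 2 / (n:ℝ)) * (ws + ε) ^ (m - 1)
            * (C * m / (m - 1) ^ 2 * y ^ (1 / (m - 1) - 1)) := by ring
    _ ≤ (θ - μ * R ^ n + η + C * y ^ (m / (m - 1)) + μ * s) * ws
          + (1 - lam) * μ * (R ^ n - r₁ ^ n) * ws := by linarith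
    _ = (θ - μ * R ^ n + η + C * y ^ (m / (m - 1)) + μ * s
          + (1 - lam) * μ * (R ^ n - r₁ ^ n)) * ws := by ring
    _ ≤ -(ε * κ * (R ^ n - r₂ ^ n)) * ws := hmain
  · have h0 : (0:ℝ) ≤ ε * κ * (R ^ n - r₂ ^ n) :=
      mul_nonneg (by positivity) hX2'
    have h1 := mul_nonneg h0 hws.le
    linarith
end

section
/- Outer subsolution estimate: let n ≥ 1 be an integer, m > 1, μ > 0, R > 0, κ > 0 and ε₀ ∈ (0,1) with 2ε₀κ < μ, let ε ∈ (0,ε₀], let r₂ ∈ (0,R] and θ ∈ [0, (μ − 2ε₀κ)(Rⁿ − r₂ⁿ)]. Define u̲_out(s,t) := μRⁿ − εκ(Rⁿ − θt − s), an affine function of (s,t) with ∂_s u̲_out = εκ, ∂_{ss} u̲_out = 0 and ∂_t u̲_out = εκθ. Then for all t ≥ 0 and all s ∈ [0, r₂ⁿ]: (P_ε u̲_out)(s,t) ≤ −εκ(Rⁿ − r₂ⁿ)·∂_s u̲_out(s,t) ≤ 0. -/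
open Set

/-- **Outer subsolution estimate** (outer piece in Lemma 4.2): the affine function
`u̲_out(s,t) = μRⁿ − εκ(Rⁿ − θt − s)`, whose derivatives are `∂_s u̲_out = εκ`,
`∂_{ss} u̲_out = 0` and `∂_t u̲_out = εκθ`, satisfies
`(P_ε u̲_out)(s,t) ≤ −εκ(Rⁿ − r₂ⁿ)∂_s u̲_out ≤ 0` on `[0, r₂ⁿ]` for all `t ≥ 0`,
provided `2ε₀κ < μ` and `0 ≤ θ ≤ (μ − 2ε₀κ)(Rⁿ − r₂ⁿ)`. -/
theorem outer_subsolution_estimate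
    (n : ℕ) (hn : 1 ≤ n) (m μ R κ ε₀ : ℝ) (hm : 1 < m) (hμ : 0 < μ) (hR : 0 < R)
    (hκ : 0 < κ) (hε₀ : ε₀ ∈ Ioo (0:ℝ) 1) (hεκμ : 2 * ε₀ * κ < μ)
    (ε : ℝ) (hε : ε ∈ Ioc (0:ℝ) ε₀)
    (r₂ : ℝ) (hr₂ : r₂ ∈ Ioc (0:ℝ) R)
    (θ : ℝ) (hθ : θ ∈ Icc (0:ℝ) ((μ - 2 * ε₀ * κ) * (R ^ n - r₂ ^ n))) :
    ∀ t ∈ Ici (0:ℝ), ∀ s ∈ Icc (0:ℝ) (r₂ ^ n),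
      (ε * κ * θ
          - (n : ℝ) ^ 2 * s ^ ((2 : ℝ) - 2 / (n : ℝ)) * (ε * κ + ε) ^ (m - 1) * 0
          - (μ * R ^ n - ε * κ * (R ^ n - θ * t - s)) * (ε * κ)
          + μ * s * (ε * κ))
        ≤ -(ε * κ * (R ^ n - r₂ ^ n)) * (ε * κ) ∧
      -(ε * κ * (R ^ n - r₂ ^ n)) * (ε * κ) ≤ 0 := by
  obtain ⟨hε₀0, hε₀1⟩ := hε₀
  obtain ⟨hε0, hεε₀⟩ := hε
  obtain ⟨hr₂0, hr₂R⟩ := hr₂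
  obtain ⟨hθ0, hθu⟩ := hθ
  intro t ht s hs
  obtain ⟨hs0, hsu⟩ := hs
  have hpow : r₂ ^ n ≤ R ^ n := pow_le_pow_left₀ hr₂0.le hr₂R n
  have ha : 0 < ε * κ := mul_pos hε0 hκ
  have ha' : ε * κ ≤ ε₀ * κ := mul_le_mul_of_nonneg_right hεε₀ hκ.le
  have haμ : 2 * (ε * κ) < μ := by nlinarith
  have htθ : 0 ≤ ε * κ * (θ * t) := mul_nonneg ha.le (mul_nonneg hθ0 ht)
  constructor
  · have hA : (μ - ε * κ) * (R ^ n - r₂ ^ n) ≤ (μ - ε * κ) * (R ^ n - s) :=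
      mul_le_mul_of_nonneg_left (by linarith) (by linarith)
    have hB : θ ≤ (μ - 2 * (ε * κ)) * (R ^ n - r₂ ^ n) :=
      hθu.trans (mul_le_mul_of_nonneg_right (by nlinarith) (sub_nonneg.mpr hpow))
    have hX : θ + ε * κ * (R ^ n - θ * t - s) + μ * s - μ * R ^ n
        + ε * κ * (R ^ n - r₂ ^ n) ≤ 0 := by nlinarith [hA, hB, htθ]
    have := mul_nonpos_of_nonneg_of_nonpos ha.le hX
    nlinarith [this]
  · have h1 : 0 ≤ ε * κ * (R ^ n - r₂ ^ n) := mul_nonneg ha.le (sub_nonneg.mpr hpow)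
    nlinarith
end

section
/- Interior supersolution estimate: let n ≥ 1 be an integer, m > 1, μ > 0, R > 0, 0 < r₀ < r₁ < R, θ > 0, and let C > 0 satisfy C ≥ ((m−1)/m)·((μ(Rⁿ − r₀ⁿ) + 2θ)(m−1)/(r₀^{2n−2}n²))^{1/(m−1)}. Let 0 < ε ≤ min(1/2, θ/Rⁿ), set δ := (ε(m−1)/(Cm))^{m−1}, ρ(t) := r₁ⁿ + θt and T⋆ := (Rⁿ − r₁ⁿ)/θ. Define w̄_mid(s,t) := μRⁿ − C(ρ(t) − s)^{m/(m−1)} + ε(ρ(t) − s). Then for all t ∈ [0,T⋆] and all s ∈ [r₀ⁿ, ρ(t) − δ) one has ∂_s w̄_mid(s,t) > 0 and (P_ε w̄_mid)(s,t) ≥ 0, where the derivatives are the classical ones, namely ∂_s w̄_mid(s,t) = (Cm/(m−1))(ρ(t)−s)^{1/(m−1)} − ε, ∂_{ss} w̄_mid(s,t) = −(Cm/(m−1)²)(ρ(t)−s)^{1/(m−1)−1} and ∂_t w̄_mid(s,t) = −θ·∂_s w̄_mid(s,t). -/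
open Set

/-- **Interior supersolution estimate** (core computation in Lemma 4.4): for
`C ≥ ((m−1)/m)((μ(Rⁿ−r₀ⁿ)+2θ)(m−1)/(r₀^{2n−2}n²))^{1/(m−1)}` and `0 < ε ≤ min(1/2, θ/Rⁿ)`,
the inner piece `w̄_mid(s,t) = μRⁿ − C(ρ(t)−s)^{m/(m−1)} + ε(ρ(t)−s)` with `ρ(t) = r₁ⁿ + θt`
has positive spatial derivative and satisfies `(P_ε w̄_mid)(s,t) ≥ 0` on `[r₀ⁿ, ρ(t)−δ)` for
`t ∈ [0, T⋆]`, where the classical derivatives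
`∂_s w̄_mid = (Cm/(m−1))(ρ−s)^{1/(m−1)} − ε`, `∂_{ss} w̄_mid = −(Cm/(m−1)²)(ρ−s)^{1/(m−1)−1}`
and `∂_t w̄_mid = −θ ∂_s w̄_mid` are substituted into `P_ε`. -/
theorem interior_supersolution_estimate
    (n : ℕ) (hn : 1 ≤ n) (m μ R : ℝ) (hm : 1 < m) (hμ : 0 < μ) (hR : 0 < R)
    (r₀ r₁ θ C ε : ℝ) (hr₀ : 0 < r₀) (h01 : r₀ < r₁) (h1R : r₁ < R) (hθ : 0 < θ)
    (hC : (m - 1) / m * ((μ * (R ^ n - r₀ ^ n) + 2 * θ) * (m - 1)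
        / (r₀ ^ (2 * n - 2) * (n : ℝ) ^ 2)) ^ (1 / (m - 1)) ≤ C)
    (hCpos : 0 < C)
    (hε : 0 < ε) (hε' : ε ≤ min (1 / 2) (θ / R ^ n)) :
    ∀ t ∈ Icc (0:ℝ) ((R ^ n - r₁ ^ n) / θ),
      ∀ s ∈ Ico (r₀ ^ n) (r₁ ^ n + θ * t - (ε * (m - 1) / (C * m)) ^ (m - 1)),
        0 < C * m / (m - 1) * (r₁ ^ n + θ * t - s) ^ (1 / (m - 1)) - ε ∧
        0 ≤ (-θ * (C * m / (m - 1) * (r₁ ^ n + θ * t - s) ^ (1 / (m - 1)) - ε)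
            - (n : ℝ) ^ 2 * s ^ ((2 : ℝ) - 2 / (n : ℝ))
              * ((C * m / (m - 1) * (r₁ ^ n + θ * t - s) ^ (1 / (m - 1)) - ε) + ε) ^ (m - 1)
              * (-(C * m / (m - 1) ^ 2) * (r₁ ^ n + θ * t - s) ^ (1 / (m - 1) - 1))
            - (μ * R ^ n - C * (r₁ ^ n + θ * t - s) ^ (m / (m - 1))
                + ε * (r₁ ^ n + θ * t - s))
              * (C * m / (m - 1) * (r₁ ^ n + θ * t - s) ^ (1 / (m - 1)) - ε)
            + μ * s * (C * m / (m - 1) * (r₁ ^ n + θ * t - s) ^ (1 / (m - 1)) - ε)) := by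
  intro t ht s hs
  obtain ⟨ht0, htT⟩ := ht
  obtain ⟨hs0, hs1⟩ := hs
  have hm1 : (0:ℝ) < m - 1 := by linarith
  have hm0 : (0:ℝ) < m := by linarith
  have hA : (0:ℝ) < C * m / (m - 1) := by positivity
  have hRn : (0:ℝ) < R ^ n := by positivity
  have hεR : ε * R ^ n ≤ θ := by
    have h2 := le_trans hε' (min_le_right _ _)
    have h3 := mul_le_mul_of_nonneg_right h2 hRn.le
    rw [div_mul_cancel₀ _ hRn.ne'] at h3
    exact h3
  have hδpos : (0:ℝ) < (ε * (m - 1) / (C * m)) ^ (m - 1) :=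
    Real.rpow_pos_of_pos (by positivity) _
  have hY : 0 < r₁ ^ n + θ * t - s := by linarith
  have hr01 : r₀ ^ n < r₁ ^ n := pow_lt_pow_left₀ h01 hr₀.le (by omega)
  have hr0R : r₀ ^ n < R ^ n := pow_lt_pow_left₀ (by linarith) hr₀.le (by omega)
  have hρ : r₁ ^ n + θ * t ≤ R ^ n := by
    have h := (le_div_iff₀ hθ).mp htT
    linarith
  have hYR : r₁ ^ n + θ * t - s ≤ R ^ n := by
    have := pow_pos hr₀ n
    linarith
  -- first claim
  have hδrt : ((ε * (m - 1) / (C * m)) ^ (m - 1)) ^ (1 / (m - 1))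
      = ε * (m - 1) / (C * m) := by
    rw [← Real.rpow_mul (by positivity), mul_one_div, div_self hm1.ne', Real.rpow_one]
  have hu_gt : ε * (m - 1) / (C * m) < (r₁ ^ n + θ * t - s) ^ (1 / (m - 1)) := by
    calc ε * (m - 1) / (C * m)
        = ((ε * (m - 1) / (C * m)) ^ (m - 1)) ^ (1 / (m - 1)) := hδrt.symm
      _ < (r₁ ^ n + θ * t - s) ^ (1 / (m - 1)) :=
          Real.rpow_lt_rpow hδpos.le (by linarith) (by positivity)
  have hu : 0 < (r₁ ^ n + θ * t - s) ^ (1 / (m - 1)) := Real.rpow_pos_of_pos hY _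
  have part1 : 0 < C * m / (m - 1) * (r₁ ^ n + θ * t - s) ^ (1 / (m - 1)) - ε := by
    have h := mul_lt_mul_of_pos_left hu_gt hA
    have he : C * m / (m - 1) * (ε * (m - 1) / (C * m)) = ε := by
      field_simp
    linarith
  refine ⟨part1, ?_⟩
  -- notation
  set Y := r₁ ^ n + θ * t - s with hYdef
  set u := Y ^ (1 / (m - 1)) with hudef
  clear_value u
  clear_value Y
  -- rewrite (W + ε) ^ (m-1)
  have e2 : (C * m / (m - 1) * u - ε + ε) ^ (m - 1)
      = (C * m / (m - 1)) ^ (m - 1) * Y := by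
    rw [sub_add_cancel, Real.mul_rpow hA.le hu.le, hudef, ← Real.rpow_mul hY.le,
      one_div_mul_cancel hm1.ne', Real.rpow_one]
  rw [e2]
  have mulYp : Y * Y ^ (1 / (m - 1) - 1) = u := by
    have h := Real.rpow_add hY 1 (1 / (m - 1) - 1)
    rw [Real.rpow_one] at h
    rw [← h, hudef]
    congr 1
    ring
  -- key algebraic identity
  have key : (-θ * (C * m / (m - 1) * u - ε)
      - (n : ℝ) ^ 2 * s ^ ((2 : ℝ) - 2 / (n : ℝ)) * ((C * m / (m - 1)) ^ (m - 1) * Y)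
        * (-(C * m / (m - 1) ^ 2) * Y ^ (1 / (m - 1) - 1))
      - (μ * R ^ n - C * Y ^ (m / (m - 1)) + ε * Y) * (C * m / (m - 1) * u - ε)
      + μ * s * (C * m / (m - 1) * u - ε))
      = (C * m / (m - 1) * u - ε)
          * (μ * s - θ - (μ * R ^ n - C * Y ^ (m / (m - 1)) + ε * Y))
        + (n : ℝ) ^ 2 * s ^ ((2 : ℝ) - 2 / (n : ℝ)) * (C * m / (m - 1)) ^ (m - 1)
          * (C * m / (m - 1) ^ 2) * u := by
    linear_combination ((n:ℝ) ^ 2 * s ^ ((2:ℝ) - 2 / (n:ℝ)) * (C * m / (m - 1)) ^ (m - 1)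
      * (C * m / (m - 1) ^ 2)) * mulYp
  rw [key]
  -- lower bounds
  set M := μ * (R ^ n - r₀ ^ n) + 2 * θ with hMdef
  clear_value M
  have hM : 0 < M := by
    have := mul_pos hμ (sub_pos.mpr hr0R)
    rw [hMdef]
    linarith
  have hF : -M ≤ μ * s - θ - (μ * R ^ n - C * Y ^ (m / (m - 1)) + ε * Y) := by
    have h1 : 0 ≤ C * Y ^ (m / (m - 1)) := by positivity
    have h2 : ε * Y ≤ θ := by
      have := mul_le_mul_of_nonneg_left hYR hε.le
      linarith
    have h3 : μ * r₀ ^ n ≤ μ * s := mul_le_mul_of_nonneg_left hs0 hμ.le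
    rw [hMdef]
    linarith
  -- lower bound on the diffusion coefficient
  have hnR : (0:ℝ) < (n:ℝ) := by exact_mod_cast hn
  have hK : 0 < M * (m - 1) / (r₀ ^ (2 * n - 2) * (n : ℝ) ^ 2) := by positivity
  have hA' : (M * (m - 1) / (r₀ ^ (2 * n - 2) * (n : ℝ) ^ 2)) ^ (1 / (m - 1))
      ≤ C * m / (m - 1) := by
    have h := mul_le_mul_of_nonneg_right hC (le_of_lt (by positivity : (0:ℝ) < m / (m-1)))
    calc (M * (m - 1) / (r₀ ^ (2 * n - 2) * (n : ℝ) ^ 2)) ^ (1 / (m - 1))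
        = (m - 1) / m * ((M * (m - 1) / (r₀ ^ (2 * n - 2) * (n : ℝ) ^ 2)) ^ (1 / (m - 1)))
          * (m / (m - 1)) := by field_simp
      _ ≤ C * (m / (m - 1)) := h
      _ = C * m / (m - 1) := by ring
  have hB : M * (m - 1) / (r₀ ^ (2 * n - 2) * (n : ℝ) ^ 2)
      ≤ (C * m / (m - 1)) ^ (m - 1) := by
    have h := Real.rpow_le_rpow (Real.rpow_nonneg hK.le _) hA' hm1.le
    rwa [← Real.rpow_mul hK.le, one_div_mul_cancel hm1.ne', Real.rpow_one] at h
  -- s ^ (2 - 2/n) ≥ r₀ ^ (2n-2)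
  have hexp : (0:ℝ) ≤ 2 - 2 / (n : ℝ) := by
    have h1 : 2 / (n:ℝ) ≤ 2 := by
      rw [div_le_iff₀ hnR]
      linarith only [(by exact_mod_cast hn : (1:ℝ) ≤ (n:ℝ))]
    linarith only [h1]
  have hS : (r₀ : ℝ) ^ (2 * n - 2) ≤ s ^ ((2 : ℝ) - 2 / (n : ℝ)) := by
    have h1 : ((r₀ ^ n : ℝ)) ^ ((2:ℝ) - 2 / (n:ℝ)) ≤ s ^ ((2:ℝ) - 2 / (n:ℝ)) :=
      Real.rpow_le_rpow (by positivity) hs0 hexp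
    have h2 : ((r₀ ^ n : ℝ)) ^ ((2:ℝ) - 2 / (n:ℝ)) = r₀ ^ (2 * n - 2) := by
      rw [← Real.rpow_natCast r₀ n, ← Real.rpow_mul hr₀.le,
        ← Real.rpow_natCast r₀ (2 * n - 2)]
      congr 1
      have hcast : ((2 * n - 2 : ℕ) : ℝ) = 2 * (n:ℝ) - 2 := by
        have h3 : 2 ≤ 2 * n := by omega
        push_cast [Nat.cast_sub h3]
        ring
      rw [hcast]
      field_simp
    linarith only [h1, h2]
  have hSpos : 0 < s ^ ((2 : ℝ) - 2 / (n : ℝ)) := Real.rpow_pos_of_pos (lt_of_lt_of_le (pow_pos hr₀ n) hs0) _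
  have hBpos : 0 < (C * m / (m - 1)) ^ (m - 1) := Real.rpow_pos_of_pos hA _
  have hnpos : (0:ℝ) < (n:ℝ) ^ 2 := by positivity
  have hr0pos : (0:ℝ) < r₀ ^ (2 * n - 2) := by positivity
  have hD1 : M * (m - 1) ≤ (n : ℝ) ^ 2 * s ^ ((2 : ℝ) - 2 / (n : ℝ))
      * (C * m / (m - 1)) ^ (m - 1) := by
    have h1 : M * (m - 1) / (r₀ ^ (2 * n - 2) * (n : ℝ) ^ 2) * (r₀ ^ (2*n-2) * (n:ℝ)^2)
        = M * (m - 1) := by field_simp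
    have h2 := mul_le_mul_of_nonneg_left (mul_le_mul hS hB hK.le hSpos.le) hnpos.le
    linarith only [h1, h2]
  have hc2 : (0:ℝ) < C * m / (m - 1) ^ 2 := by positivity
  have hD : M * (C * m / (m - 1)) * u ≤ (n : ℝ) ^ 2 * s ^ ((2 : ℝ) - 2 / (n : ℝ))
      * (C * m / (m - 1)) ^ (m - 1) * (C * m / (m - 1) ^ 2) * u := by
    have h1 : M * (C * m / (m - 1)) = M * (m - 1) * (C * m / (m - 1) ^ 2) := by
      field_simp
    rw [h1]
    exact mul_le_mul_of_nonneg_right (mul_le_mul_of_nonneg_right hD1 hc2.le) hu.le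
  -- conclude
  have h1 := mul_le_mul_of_nonneg_left hF (le_of_lt part1)
  have h2 : (C * m / (m - 1) * u - ε) * -M
      = -(M * (C * m / (m - 1)) * u) + M * ε := by ring
  rw [h2] at h1
  linarith only [h1, hD, mul_nonneg hM.le hε.le]
end

section
/- Derivation of the mass accumulation equation: let n ≥ 1 be an integer, m > 1, ε > 0, μ ∈ ℝ, R > 0 and T > 0. Let u : [0,R)×(0,T) → ℝ be nonnegative, continuous, with continuous partial derivatives ∂_t u and ∂_r u on [0,R)×(0,T), and let v(·,t) : (0,R) → ℝ be twice continuously differentiable for each t ∈ (0,T), such that for all (r,t) ∈ (0,R)×(0,T): (a) ∂_t u(r,t) = r^{1−n}·∂_r( r^{n−1}[(u+ε)^{m−1}∂_r u − u·∂_r v] )(r,t) (in particular the indicated r-derivative exists); (b) ∂_r( r^{n−1} ∂_r v )(r,t) = r^{n−1}(μ − u(r,t)); and (c) for each t, r^{n−1}∂_r v(r,t) → 0 and r^{n−1}[(u+ε)^{m−1}∂_r u − u·∂_r v](r,t) → 0 as r ↓ 0. Define w(s,t) := n∫₀^{s^{1/n}} ρ^{n−1}u(ρ,t)dρ for (s,t)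 ∈ (0,Rⁿ)×(0,T). Then for every such (s,t), ∂_s w(s,t) = u(s^{1/n},t), ∂_{ss} w(s,t) exists, and ∂_t w(s,t) = n² s^{2−2/n}(∂_s w(s,t) + ε)^{m−1} ∂_{ss} w(s,t) + w(s,t) ∂_s w(s,t) − μ s ∂_s w(s,t). -/
open Set Filter

open MeasureTheory intervalIntegral in
/-- FTC on `(0,r]` for a function with limit `0` at `0⁺`. -/
lemma ftc_limit_zero' {A A' : ℝ → ℝ} {R r : ℝ} (hr : 0 < r) (hrR : r < R)
    (hdiff : ∀ x ∈ Ioo (0:ℝ) R, HasDerivAt A (A' x) x)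
    (hlim : Tendsto A (nhdsWithin 0 (Ioi 0)) (nhds 0))
    (hint : IntervalIntegrable A' volume 0 r) :
    ∫ ρ in (0:ℝ)..r, A' ρ = A r := by
  set B : ℝ → ℝ := fun x => if x ≤ 0 then 0 else A x with hB
  have hev : ∀ x : ℝ, 0 < x → B x = A x := fun x hx => by simp [hB, not_le.mpr hx]
  have heq : ∀ᶠ y in nhdsWithin (0:ℝ) (Ioi 0), B y = A y :=
    eventually_nhdsWithin_of_forall (fun y hy => hev y hy)
  have hcont : ContinuousOn B (Icc 0 r) := by
    intro x hx
    rcases eq_or_lt_of_le hx.1 with h0 | h0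
    · have htend : Tendsto B (nhdsWithin (0:ℝ) (Ioi 0)) (nhds 0) :=
        hlim.congr' (heq.mono fun y hy => hy.symm)
      have h0' : ContinuousWithinAt B (Ioi 0) 0 := by
        have : B 0 = 0 := by simp [hB]
        rw [ContinuousWithinAt, this]; exact htend
      rw [← continuousWithinAt_insert_self] at h0'
      have hsub : Icc (0:ℝ) r ⊆ insert 0 (Ioi 0) := by
        intro y hy
        rcases eq_or_lt_of_le hy.1 with h | h
        · exact Or.inl h.symm
        · exact Or.inr h
      exact h0.symm ▸ (h0'.mono hsub)
    · have hx' : x ∈ Ioo (0:ℝ) R := ⟨h0, lt_of_le_of_lt hx.2 hrR⟩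
      have hA : ContinuousAt A x := (hdiff x hx').differentiableAt.continuousAt
      have hevx : ∀ᶠ y in nhds x, B y = A y := by
        filter_upwards [Ioi_mem_nhds h0] with y hy using hev y hy
      exact (hA.congr (hevx.mono fun y hy => hy.symm)).continuousWithinAt
  have hderiv : ∀ x ∈ Ioo (0:ℝ) r, HasDerivAt B (A' x) x := by
    intro x hx
    have hx' : x ∈ Ioo (0:ℝ) R := ⟨hx.1, hx.2.trans hrR⟩
    refine (hdiff x hx').congr_of_eventuallyEq ?_
    filter_upwards [Ioi_mem_nhds hx.1] with y hy using hev y hy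
  have := intervalIntegral.integral_eq_sub_of_hasDerivAt_of_le hr.le hcont hderiv hint
  rw [this, hev r hr]
  simp [hB]

set_option maxHeartbeats 1000000 in
/-- **Derivation of the mass accumulation equation** (Section 3): if `(u,v)` is a radially
symmetric classical solution of the regularized system (written in radial coordinates), then
the mass accumulation function `w(s,t) = n∫₀^{s^{1/n}} ρ^{n−1}u(ρ,t)dρ` satisfies
`∂_s w = u(s^{1/n},t)` and
`∂_t w = n²s^{2−2/n}(∂_s w + ε)^{m−1}∂_{ss}w + w∂_s w − μs∂_s w`. -/
theorem mass_accumulation_equation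
    (n : ℕ) (hn : 1 ≤ n) (m ε μ R T : ℝ) (hm : 1 < m) (hε : 0 < ε) (hR : 0 < R) (hT : 0 < T)
    (u v : ℝ → ℝ → ℝ)
    (hu_nonneg : ∀ r ∈ Ico (0:ℝ) R, ∀ t ∈ Ioo (0:ℝ) T, 0 ≤ u r t)
    (hu_cont : ContinuousOn (fun p : ℝ × ℝ => u p.1 p.2) (Ico 0 R ×ˢ Ioo 0 T))
    (hu_diff_t : ∀ r ∈ Ico (0:ℝ) R, ∀ t ∈ Ioo (0:ℝ) T, DifferentiableAt ℝ (fun τ => u r τ) t)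
    (hu_diff_r : ∀ r ∈ Ico (0:ℝ) R, ∀ t ∈ Ioo (0:ℝ) T, DifferentiableAt ℝ (fun x => u x t) r)
    (hu_dt_cont : ContinuousOn (fun p : ℝ × ℝ => deriv (fun τ => u p.1 τ) p.2)
      (Ico 0 R ×ˢ Ioo 0 T))
    (hu_dr_cont : ContinuousOn (fun p : ℝ × ℝ => deriv (fun x => u x p.2) p.1)
      (Ico 0 R ×ˢ Ioo 0 T))
    (hv_diff : ∀ t ∈ Ioo (0:ℝ) T, ∀ r ∈ Ioo (0:ℝ) R,
      DifferentiableAt ℝ (fun x => v x t) r ∧ DifferentiableAt ℝ (deriv (fun x => v x t)) r)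
    (hv_ddv_cont : ∀ t ∈ Ioo (0:ℝ) T,
      ContinuousOn (deriv (deriv (fun x => v x t))) (Ioo 0 R))
    (ha_diff : ∀ t ∈ Ioo (0:ℝ) T, ∀ r ∈ Ioo (0:ℝ) R,
      DifferentiableAt ℝ (fun x => x ^ (n - 1) *
        ((u x t + ε) ^ (m - 1) * deriv (fun y => u y t) x
          - u x t * deriv (fun y => v y t) x)) r)
    (ha : ∀ r ∈ Ioo (0:ℝ) R, ∀ t ∈ Ioo (0:ℝ) T,
      deriv (fun τ => u r τ) t = r ^ ((1 : ℝ) - (n : ℝ)) *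
        deriv (fun x => x ^ (n - 1) *
          ((u x t + ε) ^ (m - 1) * deriv (fun y => u y t) x
            - u x t * deriv (fun y => v y t) x)) r)
    (hb_diff : ∀ t ∈ Ioo (0:ℝ) T, ∀ r ∈ Ioo (0:ℝ) R,
      DifferentiableAt ℝ (fun x => x ^ (n - 1) * deriv (fun y => v y t) x) r)
    (hb : ∀ r ∈ Ioo (0:ℝ) R, ∀ t ∈ Ioo (0:ℝ) T,
      deriv (fun x => x ^ (n - 1) * deriv (fun y => v y t) x) r = r ^ (n - 1) * (μ - u r t))
    (hc1 : ∀ t ∈ Ioo (0:ℝ) T,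
      Tendsto (fun r => r ^ (n - 1) * deriv (fun y => v y t) r)
        (nhdsWithin 0 (Ioi 0)) (nhds 0))
    (hc2 : ∀ t ∈ Ioo (0:ℝ) T,
      Tendsto (fun r => r ^ (n - 1) *
          ((u r t + ε) ^ (m - 1) * deriv (fun y => u y t) r
            - u r t * deriv (fun y => v y t) r))
        (nhdsWithin 0 (Ioi 0)) (nhds 0))
    (w : ℝ → ℝ → ℝ)
    (hw : ∀ s t : ℝ, w s t = (n : ℝ) * ∫ ρ in (0:ℝ)..(s ^ ((n : ℝ)⁻¹)), ρ ^ (n - 1) * u ρ t) :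
    ∀ s ∈ Ioo (0:ℝ) (R ^ n), ∀ t ∈ Ioo (0:ℝ) T,
      DifferentiableAt ℝ (fun σ => w σ t) s ∧
      deriv (fun σ => w σ t) s = u (s ^ ((n : ℝ)⁻¹)) t ∧
      DifferentiableAt ℝ (deriv (fun σ => w σ t)) s ∧
      DifferentiableAt ℝ (fun τ => w s τ) t ∧
      deriv (fun τ => w s τ) t =
        (n : ℝ) ^ 2 * s ^ ((2 : ℝ) - 2 / (n : ℝ))
            * (deriv (fun σ => w σ t) s + ε) ^ (m - 1) * deriv (deriv (fun σ => w σ t)) s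
          + w s t * deriv (fun σ => w σ t) s - μ * s * deriv (fun σ => w σ t) s := by
  intro s hs t ht
  have hn0 : (n:ℝ) ≠ 0 := by positivity
  have hs0 : 0 < s := hs.1
  have hcast : ((n-1 : ℕ) : ℝ) = (n:ℝ) - 1 := by rw [Nat.cast_sub hn, Nat.cast_one]
  -- continuity of the integrands in ρ, for each time τ
  have hu_contt : ∀ τ ∈ Ioo (0:ℝ) T, ContinuousOn (fun ρ => ρ ^ (n-1) * u ρ τ) (Ico 0 R) := by
    intro τ hτ
    refine ((continuous_pow (n-1)).continuousOn).mul ?_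
    exact hu_cont.comp ((continuous_id.prodMk continuous_const).continuousOn)
      (fun ρ hρ => ⟨hρ, hτ⟩)
  -- Part 1 (generalized over σ): ∂_σ w = u(σ^{1/n}, t)
  have hws : ∀ σ ∈ Ioo (0:ℝ) (R ^ n), HasDerivAt (fun x => w x t) (u (σ ^ ((n:ℝ)⁻¹)) t) σ := by
    intro σ hσ
    have hσ0 : 0 < σ := hσ.1
    have hrpos : 0 < σ ^ ((n:ℝ)⁻¹) := Real.rpow_pos_of_pos hσ0 _
    have hrn : (σ ^ ((n:ℝ)⁻¹)) ^ n = σ := by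
      rw [← Real.rpow_natCast (σ ^ ((n:ℝ)⁻¹)) n, ← Real.rpow_mul hσ0.le,
        inv_mul_cancel₀ hn0, Real.rpow_one]
    have hrR : σ ^ ((n:ℝ)⁻¹) < R := by
      refine lt_of_pow_lt_pow_left₀ n hR.le ?_
      rw [hrn]; exact hσ.2
    have hint : IntervalIntegrable (fun ρ => ρ ^ (n-1) * u ρ t) MeasureTheory.volume
        0 (σ ^ ((n:ℝ)⁻¹)) := by
      refine ((hu_contt t ht).mono ?_).intervalIntegrable
      rw [uIcc_of_le hrpos.le]
      exact fun ρ hρ => ⟨hρ.1, lt_of_le_of_lt hρ.2 hrR⟩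
    have hmeasf : StronglyMeasurableAtFilter (fun ρ => ρ ^ (n-1) * u ρ t)
        (nhds (σ ^ ((n:ℝ)⁻¹))) :=
      ⟨Ioo 0 R, isOpen_Ioo.mem_nhds ⟨hrpos, hrR⟩,
        (((hu_contt t ht)).mono Ioo_subset_Ico_self).aestronglyMeasurable measurableSet_Ioo⟩
    have hcontf : ContinuousAt (fun ρ => ρ ^ (n-1) * u ρ t) (σ ^ ((n:ℝ)⁻¹)) :=
      (((hu_contt t ht)).mono Ioo_subset_Ico_self).continuousAt
        (isOpen_Ioo.mem_nhds ⟨hrpos, hrR⟩)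
    have hG : HasDerivAt (fun x => ∫ ρ in (0:ℝ)..x, ρ ^ (n-1) * u ρ t)
        ((σ ^ ((n:ℝ)⁻¹)) ^ (n-1) * u (σ ^ ((n:ℝ)⁻¹)) t) (σ ^ ((n:ℝ)⁻¹)) :=
      intervalIntegral.integral_hasDerivAt_right hint hmeasf hcontf
    have hpow : HasDerivAt (fun x : ℝ => x ^ ((n:ℝ)⁻¹)) ((n:ℝ)⁻¹ * σ ^ ((n:ℝ)⁻¹ - 1)) σ :=
      Real.hasDerivAt_rpow_const (Or.inl hσ0.ne')
    have hcomp := (hG.comp σ hpow).const_mul (n:ℝ)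
    have hval : (n:ℝ) * ((σ ^ ((n:ℝ)⁻¹)) ^ (n-1) * u (σ ^ ((n:ℝ)⁻¹)) t *
        ((n:ℝ)⁻¹ * σ ^ ((n:ℝ)⁻¹ - 1))) = u (σ ^ ((n:ℝ)⁻¹)) t := by
      have h1 : (σ ^ ((n:ℝ)⁻¹)) ^ (n-1) = σ ^ ((n:ℝ)⁻¹ * ((n:ℝ) - 1)) := by
        rw [← Real.rpow_natCast (σ ^ ((n:ℝ)⁻¹)) (n-1), ← Real.rpow_mul hσ0.le, hcast]
      have h2 : σ ^ ((n:ℝ)⁻¹ * ((n:ℝ) - 1)) * σ ^ ((n:ℝ)⁻¹ - 1) = 1 := by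
        rw [← Real.rpow_add hσ0, show (n:ℝ)⁻¹ * ((n:ℝ) - 1) + ((n:ℝ)⁻¹ - 1) = 0 by
          field_simp; ring, Real.rpow_zero]
      rw [h1]
      calc (n:ℝ) * (σ ^ ((n:ℝ)⁻¹ * ((n:ℝ) - 1)) * u (σ ^ ((n:ℝ)⁻¹)) t *
          ((n:ℝ)⁻¹ * σ ^ ((n:ℝ)⁻¹ - 1)))
          = ((n:ℝ) * (n:ℝ)⁻¹) * (σ ^ ((n:ℝ)⁻¹ * ((n:ℝ) - 1)) * σ ^ ((n:ℝ)⁻¹ - 1)) *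
            u (σ ^ ((n:ℝ)⁻¹)) t := by ring
        _ = u (σ ^ ((n:ℝ)⁻¹)) t := by rw [mul_inv_cancel₀ hn0, h2]; ring
    have hfun : (fun x => w x t)
        = fun x => (n:ℝ) * ∫ ρ in (0:ℝ)..(x ^ ((n:ℝ)⁻¹)), ρ ^ (n-1) * u ρ t :=
      funext fun x => hw x t
    rw [hfun, ← hval]
    exact hcomp
  -- facts about r₀ = s^{1/n}
  have hr₀pos : 0 < s ^ ((n:ℝ)⁻¹) := Real.rpow_pos_of_pos hs0 _
  have hr₀n : (s ^ ((n:ℝ)⁻¹)) ^ n = s := by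
    rw [← Real.rpow_natCast (s ^ ((n:ℝ)⁻¹)) n, ← Real.rpow_mul hs0.le,
      inv_mul_cancel₀ hn0, Real.rpow_one]
  have hr₀R : s ^ ((n:ℝ)⁻¹) < R := by
    refine lt_of_pow_lt_pow_left₀ n hR.le ?_
    rw [hr₀n]; exact hs.2
  have hr₀mem : s ^ ((n:ℝ)⁻¹) ∈ Ioo (0:ℝ) R := ⟨hr₀pos, hr₀R⟩
  have part1 := hws s hs
  -- Part 2 : second derivative
  have hev : deriv (fun x => w x t) =ᶠ[nhds s] fun σ => u (σ ^ ((n:ℝ)⁻¹)) t :=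
    eventually_of_mem (isOpen_Ioo.mem_nhds hs) (fun σ hσ => (hws σ hσ).deriv)
  have hucomp : HasDerivAt (fun σ => u (σ ^ ((n:ℝ)⁻¹)) t)
      (deriv (fun x => u x t) (s ^ ((n:ℝ)⁻¹)) * ((n:ℝ)⁻¹ * s ^ ((n:ℝ)⁻¹ - 1))) s :=
    by have h := HasDerivAt.comp s ((hu_diff_r (s ^ ((n:ℝ)⁻¹)) ⟨hr₀pos.le, hr₀R⟩ t ht).hasDerivAt)
        (Real.hasDerivAt_rpow_const (p := (n:ℝ)⁻¹) (Or.inl hs0.ne'))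
       exact h
  have h3 : DifferentiableAt ℝ (deriv (fun x => w x t)) s :=
    hucomp.differentiableAt.congr_of_eventuallyEq hev
  have hdd : deriv (deriv (fun x => w x t)) s
      = deriv (fun x => u x t) (s ^ ((n:ℝ)⁻¹)) * ((n:ℝ)⁻¹ * s ^ ((n:ℝ)⁻¹ - 1)) := by
    rw [hev.deriv_eq]; exact hucomp.deriv
  -- Part 3 : time derivative via differentiation under the integral sign
  set δ : ℝ := min t (T - t) / 2 with hδdef
  have hδpos : 0 < δ := by
    have h1 : 0 < t := ht.1
    have h2 : 0 < T - t := sub_pos.mpr ht.2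
    positivity
  have hδt : δ < t := by
    have h1 : δ ≤ t / 2 := by
      rw [hδdef]; exact div_le_div_of_nonneg_right (min_le_left _ _) (by norm_num : (0:ℝ) ≤ 2)
    linarith [ht.1]
  have hδT : t + δ < T := by
    have h1 : δ ≤ (T - t) / 2 := by
      rw [hδdef]; exact div_le_div_of_nonneg_right (min_le_right _ _) (by norm_num : (0:ℝ) ≤ 2)
    have h2 : 0 < T - t := sub_pos.mpr ht.2
    linarith
  have hKsub : Icc 0 (s ^ ((n:ℝ)⁻¹)) ×ˢ Icc (t - δ) (t + δ) ⊆ Ico 0 R ×ˢ Ioo 0 T := by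
    rintro ⟨ρ, τ⟩ ⟨hρ, hτ⟩
    exact ⟨⟨hρ.1, lt_of_le_of_lt hρ.2 hr₀R⟩,
      ⟨lt_of_lt_of_le (by linarith) hτ.1, lt_of_le_of_lt hτ.2 (by linarith)⟩⟩
  obtain ⟨C, hC⟩ := (isCompact_Icc.prod isCompact_Icc).exists_bound_of_continuousOn
    (hu_dt_cont.mono hKsub)
  have hballT : Metric.ball t δ ⊆ Ioo 0 T := by
    intro τ hτ
    rw [Real.ball_eq_Ioo] at hτ
    exact ⟨by linarith [hτ.1], by linarith [hτ.2]⟩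
  have hIoc : Set.uIoc (0:ℝ) (s ^ ((n:ℝ)⁻¹)) = Ioc 0 (s ^ ((n:ℝ)⁻¹)) := uIoc_of_le hr₀pos.le
  have hIocsub : Set.uIoc (0:ℝ) (s ^ ((n:ℝ)⁻¹)) ⊆ Ico 0 R := by
    rw [hIoc]; exact fun ρ hρ => ⟨hρ.1.le, lt_of_le_of_lt hρ.2 hr₀R⟩
  have hIccsub : Icc (0:ℝ) (s ^ ((n:ℝ)⁻¹)) ⊆ Ico 0 R :=
    fun ρ hρ => ⟨hρ.1, lt_of_le_of_lt hρ.2 hr₀R⟩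
  have hdu_contt : ContinuousOn (fun ρ => ρ ^ (n-1) * deriv (fun τ' => u ρ τ') t)
      (Ico 0 R) := by
    refine ((continuous_pow (n-1)).continuousOn).mul ?_
    exact hu_dt_cont.comp ((continuous_id.prodMk continuous_const).continuousOn)
      (fun ρ hρ => ⟨hρ, ht⟩)
  have hF_meas : ∀ᶠ τ in nhds t, MeasureTheory.AEStronglyMeasurable
      (fun ρ => ρ ^ (n-1) * u ρ τ)
      (MeasureTheory.volume.restrict (Set.uIoc (0:ℝ) (s ^ ((n:ℝ)⁻¹)))) := by
    filter_upwards [Ioo_mem_nhds ht.1 ht.2] with τ hτ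
    exact ((hu_contt τ hτ).mono hIocsub).aestronglyMeasurable (hIoc ▸ measurableSet_Ioc)
  have hF_int : IntervalIntegrable (fun ρ => ρ ^ (n-1) * u ρ t) MeasureTheory.volume
      0 (s ^ ((n:ℝ)⁻¹)) := by
    refine ((hu_contt t ht).mono ?_).intervalIntegrable
    rw [uIcc_of_le hr₀pos.le]; exact hIccsub
  have hF'_meas : MeasureTheory.AEStronglyMeasurable
      (fun ρ => ρ ^ (n-1) * deriv (fun τ' => u ρ τ') t)
      (MeasureTheory.volume.restrict (Set.uIoc (0:ℝ) (s ^ ((n:ℝ)⁻¹)))) :=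
    (hdu_contt.mono hIocsub).aestronglyMeasurable (hIoc ▸ measurableSet_Ioc)
  have h_bound : ∀ᵐ ρ ∂MeasureTheory.volume, ρ ∈ Set.uIoc (0:ℝ) (s ^ ((n:ℝ)⁻¹)) →
      ∀ τ ∈ Metric.ball t δ, ‖ρ ^ (n-1) * deriv (fun τ' => u ρ τ') τ‖
        ≤ (s ^ ((n:ℝ)⁻¹)) ^ (n-1) * C := by
    refine MeasureTheory.ae_of_all _ fun ρ hρ τ hτ => ?_
    rw [hIoc] at hρ
    have hτ' : τ ∈ Icc (t - δ) (t + δ) := by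
      rw [Real.ball_eq_Ioo] at hτ; exact ⟨hτ.1.le, hτ.2.le⟩
    have hCb := hC (ρ, τ) ⟨⟨hρ.1.le, hρ.2⟩, hτ'⟩
    have h1 : ‖ρ ^ (n-1) * deriv (fun τ' => u ρ τ') τ‖
        = ρ ^ (n-1) * ‖deriv (fun τ' => u ρ τ') τ‖ := by
      rw [norm_mul, Real.norm_eq_abs ((ρ:ℝ) ^ (n-1)), abs_of_nonneg (pow_nonneg hρ.1.le _)]
    rw [h1]
    exact mul_le_mul (pow_le_pow_left₀ hρ.1.le hρ.2 _) hCb (norm_nonneg _)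
      (pow_nonneg hr₀pos.le _)
  have h_diff : ∀ᵐ ρ ∂MeasureTheory.volume, ρ ∈ Set.uIoc (0:ℝ) (s ^ ((n:ℝ)⁻¹)) →
      ∀ τ ∈ Metric.ball t δ, HasDerivAt (fun τ' => ρ ^ (n-1) * u ρ τ')
        (ρ ^ (n-1) * deriv (fun τ' => u ρ τ') τ) τ := by
    refine MeasureTheory.ae_of_all _ fun ρ hρ τ hτ => ?_
    rw [hIoc] at hρ
    exact ((hu_diff_t ρ ⟨hρ.1.le, lt_of_le_of_lt hρ.2 hr₀R⟩ τ (hballT hτ)).hasDerivAt).const_mul _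
  have hmain : HasDerivAt (fun τ => ∫ ρ in (0:ℝ)..(s ^ ((n:ℝ)⁻¹)), ρ ^ (n-1) * u ρ τ)
      (∫ ρ in (0:ℝ)..(s ^ ((n:ℝ)⁻¹)), ρ ^ (n-1) * deriv (fun τ' => u ρ τ') t) t :=
    (intervalIntegral.hasDerivAt_integral_of_dominated_loc_of_deriv_le
      (F := fun τ ρ => ρ ^ (n-1) * u ρ τ)
      (F' := fun τ ρ => ρ ^ (n-1) * deriv (fun τ' => u ρ τ') τ)
      (bound := fun _ => (s ^ ((n:ℝ)⁻¹)) ^ (n-1) * C)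
      (Metric.ball_mem_nhds t hδpos) hF_meas hF_int hF'_meas h_bound intervalIntegrable_const h_diff).2
  -- evaluate the integral ∫ ρ^{n-1} ∂_t u  via hypothesis (a) and (c2)
  have hone : ∀ x : ℝ, 0 < x → (x:ℝ) ^ (n-1) * x ^ ((1:ℝ) - (n:ℝ)) = 1 := by
    intro x hx
    rw [← Real.rpow_natCast x (n-1), hcast, ← Real.rpow_add hx,
      show ((n:ℝ) - 1) + ((1:ℝ) - (n:ℝ)) = 0 by ring, Real.rpow_zero]
  have hAderiv : ∀ x ∈ Ioo (0:ℝ) R, HasDerivAt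
      (fun x => x ^ (n-1) * ((u x t + ε) ^ (m-1) * deriv (fun y => u y t) x
        - u x t * deriv (fun y => v y t) x))
      (x ^ (n-1) * deriv (fun τ' => u x τ') t) x := by
    intro x hx
    have hd := (ha_diff t ht x hx).hasDerivAt
    have heq : x ^ (n-1) * deriv (fun τ' => u x τ') t
        = deriv (fun x => x ^ (n-1) * ((u x t + ε) ^ (m-1) * deriv (fun y => u y t) x
          - u x t * deriv (fun y => v y t) x)) x := by
      rw [ha x hx t ht, ← mul_assoc, hone x hx.1, one_mul]
    rw [heq]
    exact hd
  have hI'int : IntervalIntegrable (fun ρ => ρ ^ (n-1) * deriv (fun τ' => u ρ τ') t)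
      MeasureTheory.volume 0 (s ^ ((n:ℝ)⁻¹)) := by
    refine (hdu_contt.mono ?_).intervalIntegrable
    rw [uIcc_of_le hr₀pos.le]; exact hIccsub
  have hIA : (∫ ρ in (0:ℝ)..(s ^ ((n:ℝ)⁻¹)), ρ ^ (n-1) * deriv (fun τ' => u ρ τ') t)
      = (s ^ ((n:ℝ)⁻¹)) ^ (n-1) * ((u (s ^ ((n:ℝ)⁻¹)) t + ε) ^ (m-1)
          * deriv (fun y => u y t) (s ^ ((n:ℝ)⁻¹))
        - u (s ^ ((n:ℝ)⁻¹)) t * deriv (fun y => v y t) (s ^ ((n:ℝ)⁻¹))) :=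
    ftc_limit_zero' hr₀pos hr₀R hAderiv (hc2 t ht) hI'int
  have hwt : HasDerivAt (fun τ => w s τ)
      ((n:ℝ) * ((s ^ ((n:ℝ)⁻¹)) ^ (n-1) * ((u (s ^ ((n:ℝ)⁻¹)) t + ε) ^ (m-1)
          * deriv (fun y => u y t) (s ^ ((n:ℝ)⁻¹))
        - u (s ^ ((n:ℝ)⁻¹)) t * deriv (fun y => v y t) (s ^ ((n:ℝ)⁻¹))))) t := by
    have h := hmain.const_mul (n:ℝ)
    rw [hIA] at h
    have hfun : (fun τ => w s τ)
        = fun τ => (n:ℝ) * ∫ ρ in (0:ℝ)..(s ^ ((n:ℝ)⁻¹)), ρ ^ (n-1) * u ρ τ :=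
      funext fun τ => hw s τ
    rw [hfun]
    exact h
  -- the v-flux identity from (b), (c1)
  have hBderiv : ∀ x ∈ Ioo (0:ℝ) R, HasDerivAt
      (fun x => x ^ (n-1) * deriv (fun y => v y t) x)
      (x ^ (n-1) * (μ - u x t)) x := by
    intro x hx
    have hd := (hb_diff t ht x hx).hasDerivAt
    rw [← hb x hx t ht]
    exact hd
  have hJcont : ContinuousOn (fun ρ => ρ ^ (n-1) * (μ - u ρ t)) (Ico 0 R) := by
    refine ((continuous_pow (n-1)).continuousOn).mul (continuousOn_const.sub ?_)
    exact hu_cont.comp ((continuous_id.prodMk continuous_const).continuousOn)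
      (fun ρ hρ => ⟨hρ, ht⟩)
  have hJint : IntervalIntegrable (fun ρ => ρ ^ (n-1) * (μ - u ρ t))
      MeasureTheory.volume 0 (s ^ ((n:ℝ)⁻¹)) := by
    refine (hJcont.mono ?_).intervalIntegrable
    rw [uIcc_of_le hr₀pos.le]; exact hIccsub
  have hJB : (∫ ρ in (0:ℝ)..(s ^ ((n:ℝ)⁻¹)), ρ ^ (n-1) * (μ - u ρ t))
      = (s ^ ((n:ℝ)⁻¹)) ^ (n-1) * deriv (fun y => v y t) (s ^ ((n:ℝ)⁻¹)) :=
    ftc_limit_zero' hr₀pos hr₀R hBderiv (hc1 t ht) hJint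
  -- compute the left side of hJB
  have hμint : IntervalIntegrable (fun ρ : ℝ => ρ ^ (n-1) * μ)
      MeasureTheory.volume 0 (s ^ ((n:ℝ)⁻¹)) :=
    (((continuous_pow (n-1)).mul continuous_const).intervalIntegrable _ _)
  have hsplit : (∫ ρ in (0:ℝ)..(s ^ ((n:ℝ)⁻¹)), ρ ^ (n-1) * (μ - u ρ t))
      = (∫ ρ in (0:ℝ)..(s ^ ((n:ℝ)⁻¹)), ρ ^ (n-1) * μ)
        - ∫ ρ in (0:ℝ)..(s ^ ((n:ℝ)⁻¹)), ρ ^ (n-1) * u ρ t := by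
    rw [← intervalIntegral.integral_sub hμint hF_int]
    congr 1; funext ρ; ring
  have hμval : (∫ ρ in (0:ℝ)..(s ^ ((n:ℝ)⁻¹)), ρ ^ (n-1) * μ) = s / n * μ := by
    rw [intervalIntegral.integral_mul_const, integral_pow]
    rw [Nat.sub_add_cancel hn, hr₀n, zero_pow (by omega), sub_zero]
    push_cast [hcast]
    ring_nf
  have huval : (∫ ρ in (0:ℝ)..(s ^ ((n:ℝ)⁻¹)), ρ ^ (n-1) * u ρ t) = w s t / n := by
    rw [hw s t]; field_simp
  have hnPDv : (n:ℝ) * ((s ^ ((n:ℝ)⁻¹)) ^ (n-1) * deriv (fun y => v y t) (s ^ ((n:ℝ)⁻¹)))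
      = μ * s - w s t := by
    rw [← hJB, hsplit, hμval, huval]
    field_simp
  -- final assembly
  refine ⟨part1.differentiableAt, part1.deriv, h3, hwt.differentiableAt, ?_⟩
  rw [hwt.deriv, part1.deriv, hdd]
  have hP : (s ^ ((n:ℝ)⁻¹)) ^ (n-1) = s ^ (1 - (n:ℝ)⁻¹) := by
    rw [← Real.rpow_natCast (s ^ ((n:ℝ)⁻¹)) (n-1), ← Real.rpow_mul hs0.le, hcast]
    congr 1; field_simp
  have hsab : s ^ ((2:ℝ) - 2 / (n:ℝ)) * s ^ ((n:ℝ)⁻¹ - 1) = s ^ (1 - (n:ℝ)⁻¹) := by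
    rw [← Real.rpow_add hs0]
    congr 1; field_simp; ring
  have hn2 : (n:ℝ) * (n:ℝ)⁻¹ = 1 := mul_inv_cancel₀ hn0
  rw [hP] at hnPDv ⊢
  linear_combination (-(u (s ^ ((n:ℝ)⁻¹)) t)) * hnPDv
    + (-((n:ℝ)^2 * (n:ℝ)⁻¹ * (u (s ^ ((n:ℝ)⁻¹)) t + ε) ^ (m-1)
        * deriv (fun x => u x t) (s ^ ((n:ℝ)⁻¹)))) * hsab
    + (-((n:ℝ) * (u (s ^ ((n:ℝ)⁻¹)) t + ε) ^ (m-1)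
        * deriv (fun x => u x t) (s ^ ((n:ℝ)⁻¹)) * s ^ (1 - (n:ℝ)⁻¹))) * hn2
end
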